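/- arXiv:math/0209407 — 12 statements merged into one kernel-verified Lean document; each statement's English description precedes it below -/
import Mathlib

section
/- Let p be a prime, v : ℤ_p → ℤ_p a 1-Lipschitz (compatible) function, and c, d ∈ ℤ_p with c not divisible by p. Then the function g(x) = d + c·x + p·v(x) is bijective modulo p^l for every l ≥ 1. -/
/-- A function on the `p`-adic integers is *compatible* if it is 1-Lipschitz. -/
def IsCompatible {p : ℕ} [Fact p.Prime] (f : ℤ_[p] → ℤ_[p]) : Prop :=
  ∀ x y : ℤ_[p], ‖f x - f y‖ ≤ ‖x - y‖

/-- `f` is bijective modulo `p^k`: it induces a bijection of `ZMod (p^k)`. -/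
def BijectiveMod {p : ℕ} [Fact p.Prime] (f : ℤ_[p] → ℤ_[p]) (k : ℕ) : Prop :=
  ∃ g : ZMod (p ^ k) → ZMod (p ^ k),
    (∀ x : ℤ_[p], g (PadicInt.toZModPow k x) = PadicInt.toZModPow k (f x)) ∧
    Function.Bijective g

theorem stmt1 {p : ℕ} [Fact p.Prime] (v : ℤ_[p] → ℤ_[p]) (hv : IsCompatible v)
    (c d : ℤ_[p]) (hc : ¬ (p : ℤ_[p]) ∣ c) :
    ∀ l : ℕ, 1 ≤ l → BijectiveMod (fun x => d + c * x + p * v x) l := by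
  intro l _
  set f : ℤ_[p] → ℤ_[p] := fun x => d + c * x + p * v x with hf
  have hp : (1 : ℕ) < p := (Fact.out (p := p.Prime)).one_lt
  have hcnorm : ‖c‖ = 1 := by
    refine le_antisymm c.norm_le_one ?_
    by_contra h
    exact hc ((PadicInt.norm_lt_one_iff_dvd c).mp (lt_of_not_ge h))
  -- the key isometry property
  have hnorm : ∀ x y : ℤ_[p], ‖f x - f y‖ = ‖x - y‖ := by
    intro x y
    rcases eq_or_ne x y with rfl | hxy
    · simp
    have hxy' : (0 : ℝ) < ‖x - y‖ := by
      simpa [norm_pos_iff, sub_eq_zero] using hxy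
    have h1 : ‖c * (x - y)‖ = ‖x - y‖ := by
      rw [norm_mul, hcnorm, one_mul]
    have h2 : ‖(p : ℤ_[p]) * (v x - v y)‖ < ‖x - y‖ := by
      rw [norm_mul, PadicInt.norm_p]
      calc (p : ℝ)⁻¹ * ‖v x - v y‖ ≤ (p : ℝ)⁻¹ * ‖x - y‖ := by
            apply mul_le_mul_of_nonneg_left (hv x y)
            positivity
        _ < 1 * ‖x - y‖ := by
            apply mul_lt_mul_of_pos_right _ hxy'
            rw [inv_lt_one_iff₀]
            right; exact_mod_cast hp
        _ = ‖x - y‖ := one_mul _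
    have hrw : f x - f y = c * (x - y) + (p : ℤ_[p]) * (v x - v y) := by
      simp only [hf]; ring
    rw [hrw, PadicInt.norm_add_eq_max_of_ne (by rw [h1]; exact (ne_of_lt h2).symm), h1,
      max_eq_left (le_of_lt (h1 ▸ h2))]
  -- congruence mod p^l is equivalent to norm bound
  have hcong : ∀ x y : ℤ_[p],
      PadicInt.toZModPow l x = PadicInt.toZModPow l y ↔ ‖x - y‖ ≤ (p : ℝ) ^ (-(l : ℤ)) := by
    intro x y
    rw [PadicInt.norm_le_pow_iff_mem_span_pow, ← PadicInt.ker_toZModPow, RingHom.mem_ker,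
      map_sub, sub_eq_zero]
  haveI : NeZero (p ^ l) := ⟨pow_ne_zero l (Fact.out (p := p.Prime)).ne_zero⟩
  -- the lift
  set lift : ZMod (p ^ l) → ℤ_[p] := fun a => ((a.val : ℕ) : ℤ_[p]) with hlift
  have hsec : ∀ a : ZMod (p ^ l), PadicInt.toZModPow l (lift a) = a := by
    intro a
    simp [hlift, map_natCast, ZMod.natCast_val, ZMod.cast_id]
  refine ⟨fun a => PadicInt.toZModPow l (f (lift a)), ?_, ?_⟩
  · intro x
    rw [hcong]
    rw [hnorm]
    rw [← hcong]
    exact hsec _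
  · apply Finite.injective_iff_bijective.mp
    intro a b hab
    rw [hcong, hnorm, ← hcong, hsec, hsec] at hab
    exact hab
end

section
/- Let p be a prime, v : ℤ_p → ℤ_p a 1-Lipschitz (compatible) function, and c ∈ ℤ_p with c not divisible by p. Then the function h(x) = c + x + p·(v(x+1) - v(x)) is transitive modulo p^k for every k ≥ 1, i.e., it induces a single-cycle permutation on ℤ/p^k ℤ. -/
/-- `f` is transitive modulo `p^k`: it induces a single-cycle permutation of `ZMod (p^k)`. -/
def TransitiveMod {p : ℕ} [Fact p.Prime] (f : ℤ_[p] → ℤ_[p]) (k : ℕ) : Prop :=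
  ∃ g : ZMod (p ^ k) → ZMod (p ^ k),
    (∀ x : ℤ_[p], g (PadicInt.toZModPow k x) = PadicInt.toZModPow k (f x)) ∧
    ∀ a b : ZMod (p ^ k), ∃ m : ℕ, g^[m] a = b

/-!
Write `h x = x + c + p * D x` with `D x = v (x + 1) - v x`, so that
`h^[p^k] z = z + p^k * c + p * ∑ i < p^k, D (h^[i] z)`.
If `h` is transitive modulo `p^k`, the points `h^[i] z`, `i < p^k`, run once through all residues
modulo `p^k`, as do the integers `i < p^k`; since `D` is compatible, the sum is therefore congruent
modulo `p^k` to the telescoping sum `∑ i < p^k, D i = v (p^k) - v 0 ≡ 0`. Hence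
`h^[p^k] z ≡ z + p^k * c` modulo `p^(k+1)`, and since `c` is a unit, iterating `h^[p^k]` runs
through all lifts of a residue modulo `p^k`: `h` is transitive modulo `p^(k+1)`.
-/

open Finset Function PadicInt

lemma sum_range_card_iterate_eq_sum_univ {β M : Type*} [Fintype β] [AddCommMonoid M]
    {g : β → β} (hg : ∀ a b, ∃ m, g^[m] a = b) (F : β → M) (a : β) :
    ∑ i ∈ range (Fintype.card β), F (g^[i] a) = ∑ b, F b := by
  obtain ⟨m, hm⟩ := hg (g a) a
  have hpos : 0 < minimalPeriod g a :=
    IsPeriodicPt.minimalPeriod_pos m.succ_pos (by rwa [IsPeriodicPt, IsFixedPt, iterate_succ_apply])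
  have hmaps : ∀ i ∈ range (minimalPeriod g a), g^[i] a ∈ (univ : Finset β) :=
    fun _ _ => mem_univ _
  have hinj : Set.InjOn (g^[·] a) (range (minimalPeriod g a)) := by
    rw [coe_range]; exact iterate_injOn_Iio_minimalPeriod
  have hsurj : Set.SurjOn (g^[·] a) (range (minimalPeriod g a)) (univ : Finset β) := by
    intro b _
    obtain ⟨n, rfl⟩ := hg a b
    exact ⟨n % minimalPeriod g a, mem_range.2 (Nat.mod_lt _ hpos), iterate_mod_minimalPeriod_eq⟩
  have hcard : minimalPeriod g a = Fintype.card β := by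
    simpa using card_nbij _ hmaps hinj hsurj
  rw [← hcard]
  exact sum_nbij _ hmaps hinj hsurj fun _ _ => rfl

lemma iterate_eq_add_sum_range {G : Type*} [AddCommGroup G] (f : G → G) (n : ℕ) (x : G) :
    f^[n] x = x + ∑ i ∈ range n, (f (f^[i] x) - f^[i] x) := by
  simp_rw [← iterate_succ_apply' f]
  rw [sum_range_sub (f^[·] x), iterate_zero_apply]
  abel

lemma dvd_iterate_mul_sub {R : Type*} [CommRing R] {f : R → R} {q d : R} {n : ℕ}
    (h : ∀ z, q ∣ f^[n] z - (z + d)) (j : ℕ) (z : R) : q ∣ f^[j * n] z - (z + j * d) := by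
  induction j generalizing z with
  | zero => simp
  | succ j ih =>
    have hsplit : f^[(j + 1) * n] z - (z + (j + 1 : ℕ) * d) =
        (f^[j * n] (f^[n] z) - (f^[n] z + j * d)) + (f^[n] z - (z + d)) := by
      rw [Nat.succ_mul, iterate_add_apply]; push_cast; ring
    rw [hsplit]
    exact dvd_add (ih _) (h z)

section

variable {p : ℕ} [Fact p.Prime]

namespace PadicInt

lemma toZModPow_eq_zero_iff {k : ℕ} {x : ℤ_[p]} :
    toZModPow k x = 0 ↔ (p : ℤ_[p]) ^ k ∣ x := by
  rw [← RingHom.mem_ker, ker_toZModPow, Ideal.mem_span_singleton]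

lemma toZModPow_eq_iff_dvd_sub {k : ℕ} {x y : ℤ_[p]} :
    toZModPow k x = toZModPow k y ↔ (p : ℤ_[p]) ^ k ∣ x - y := by
  rw [← sub_eq_zero, ← map_sub, toZModPow_eq_zero_iff]

lemma toZMod_eq_zero_iff {x : ℤ_[p]} : toZMod x = 0 ↔ (p : ℤ_[p]) ∣ x := by
  rw [← RingHom.mem_ker, ker_toZMod, maximalIdeal_eq_span_p, Ideal.mem_span_singleton]

lemma exists_nat_dvd_add_mul {c : ℤ_[p]} (hc : ¬(p : ℤ_[p]) ∣ c) (t : ℤ_[p]) :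
    ∃ j : ℕ, (p : ℤ_[p]) ∣ t + j * c := by
  have hc' : toZMod c ≠ 0 := mt toZMod_eq_zero_iff.1 hc
  refine ⟨(-toZMod t / toZMod c).val, toZMod_eq_zero_iff.1 ?_⟩
  simp [div_mul_cancel₀ _ hc']

end PadicInt

namespace IsCompatible

variable {f g : ℤ_[p] → ℤ_[p]}

lemma dvd_sub (hf : IsCompatible f) {k : ℕ} {x y : ℤ_[p]} (h : (p : ℤ_[p]) ^ k ∣ x - y) :
    (p : ℤ_[p]) ^ k ∣ f x - f y := by
  rw [← Ideal.mem_span_singleton, ← norm_le_pow_iff_mem_span_pow] at h ⊢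
  exact (hf x y).trans h

lemma add (hf : IsCompatible f) (hg : IsCompatible g) : IsCompatible fun x => f x + g x := by
  intro x y
  rw [show f x + g x - (f y + g y) = (f x - f y) + (g x - g y) by ring]
  exact (nonarchimedean _ _).trans (max_le (hf x y) (hg x y))

lemma sub (hf : IsCompatible f) (hg : IsCompatible g) : IsCompatible fun x => f x - g x := by
  intro x y
  rw [show f x - g x - (f y - g y) = (f x - f y) + -(g x - g y) by ring]
  exact (nonarchimedean _ _).trans (max_le (hf x y) ((norm_neg _).trans_le (hg x y)))

lemma const_mul (hf : IsCompatible f) (a : ℤ_[p]) : IsCompatible fun x => a * f x := by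
  intro x y
  rw [← mul_sub, norm_mul]
  exact (mul_le_of_le_one_left (norm_nonneg _) (norm_le_one a)).trans (hf x y)

lemma comp_add_right (hf : IsCompatible f) (a : ℤ_[p]) : IsCompatible fun x => f (x + a) := by
  intro x y
  simpa using hf (x + a) (y + a)

end IsCompatible

lemma isCompatible_const_add (c : ℤ_[p]) : IsCompatible fun x => c + x := by
  intro x y
  simp

noncomputable def modPowMap (f : ℤ_[p] → ℤ_[p]) (k : ℕ) (a : ZMod (p ^ k)) : ZMod (p ^ k) :=
  toZModPow k (f a.val)

lemma IsCompatible.modPowMap_toZModPow {f : ℤ_[p] → ℤ_[p]} (hf : IsCompatible f) (k : ℕ)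
    (x : ℤ_[p]) : modPowMap f k (toZModPow k x) = toZModPow k (f x) := by
  rw [modPowMap, toZModPow_eq_iff_dvd_sub]
  apply hf.dvd_sub
  rw [← toZModPow_eq_iff_dvd_sub, map_natCast, ZMod.natCast_zmod_val]

lemma transitiveMod_iff {f : ℤ_[p] → ℤ_[p]} (hf : IsCompatible f) {k : ℕ} :
    TransitiveMod f k ↔ ∀ x y : ℤ_[p], ∃ m, (p : ℤ_[p]) ^ k ∣ f^[m] x - y := by
  constructor
  · rintro ⟨g, hg, htr⟩ x y
    obtain ⟨m, hm⟩ := htr (toZModPow k x) (toZModPow k y)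
    refine ⟨m, toZModPow_eq_iff_dvd_sub.1 ?_⟩
    rw [Semiconj.iterate_right (fun x => (hg x).symm) m x, hm]
  · intro h
    refine ⟨modPowMap f k, hf.modPowMap_toZModPow k, fun a b => ?_⟩
    obtain ⟨x, rfl⟩ := ZMod.ringHom_surjective (toZModPow k) a
    obtain ⟨y, rfl⟩ := ZMod.ringHom_surjective (toZModPow k) b
    obtain ⟨m, hm⟩ := h x y
    refine ⟨m, ?_⟩
    rw [← Semiconj.iterate_right (fun x => (hf.modPowMap_toZModPow k x).symm) m x,
      toZModPow_eq_iff_dvd_sub.2 hm]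

lemma TransitiveMod.toZModPow_sum_range_iterate {f w : ℤ_[p] → ℤ_[p]} {k : ℕ}
    (ht : TransitiveMod f k) (hw : IsCompatible w) (x : ℤ_[p]) :
    toZModPow k (∑ i ∈ range (p ^ k), w (f^[i] x)) = ∑ a, modPowMap w k a := by
  obtain ⟨g, hg, htr⟩ := ht
  rw [← sum_range_card_iterate_eq_sum_univ htr _ (toZModPow k x), ZMod.card, map_sum]
  refine sum_congr rfl fun i _ => ?_
  rw [← Semiconj.iterate_right (fun x => (hg x).symm) i x, hw.modPowMap_toZModPow]

lemma transitiveMod_add_one (k : ℕ) : TransitiveMod (fun x : ℤ_[p] => x + 1) k :=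
  ⟨(· + 1), fun x => by simp, fun a b => ⟨(b - a).val, by simp⟩⟩

lemma IsCompatible.dvd_sum_range_iterate {v f : ℤ_[p] → ℤ_[p]} (hv : IsCompatible v) {k : ℕ}
    (ht : TransitiveMod f k) (z : ℤ_[p]) :
    (p : ℤ_[p]) ^ k ∣ ∑ i ∈ range (p ^ k), (v (f^[i] z + 1) - v (f^[i] z)) := by
  have hw : IsCompatible fun x => v (x + 1) - v x := (hv.comp_add_right 1).sub hv
  -- compare with the orbit of `0` under `x ↦ x + 1`, along which the sum telescopes
  rw [← toZModPow_eq_zero_iff, ht.toZModPow_sum_range_iterate hw,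
    ← (transitiveMod_add_one k).toZModPow_sum_range_iterate hw 0]
  have htel := sum_range_sub (fun i : ℕ => v i) (p ^ k)
  push_cast at htel
  simp only [add_right_iterate_apply, zero_add, nsmul_one, htel]
  exact toZModPow_eq_zero_iff.2 (hv.dvd_sub (by simp))

lemma dvd_iterate_pow_sub_of_transitiveMod {v : ℤ_[p] → ℤ_[p]} (hv : IsCompatible v)
    {c : ℤ_[p]} {k : ℕ}
    (ht : TransitiveMod (fun x => c + x + p * (v (x + 1) - v x)) k) (z : ℤ_[p]) :
    (p : ℤ_[p]) ^ (k + 1) ∣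
      (fun x => c + x + p * (v (x + 1) - v x))^[p ^ k] z - (z + p ^ k * c) := by
  set h : ℤ_[p] → ℤ_[p] := fun x => c + x + p * (v (x + 1) - v x)
  have hdiff : ∀ y, h y - y = c + p * (v (y + 1) - v y) := fun y => by simp only [h]; ring
  have hstep : h^[p ^ k] z - (z + p ^ k * c) =
      p * ∑ i ∈ range (p ^ k), (v (h^[i] z + 1) - v (h^[i] z)) := by
    rw [iterate_eq_add_sum_range, sum_congr rfl fun i _ => hdiff _, sum_add_distrib, sum_const,
      card_range, nsmul_eq_mul, mul_sum]
    push_cast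
    ring
  rw [hstep, pow_succ']
  exact mul_dvd_mul_left _ (hv.dvd_sum_range_iterate ht z)

lemma exists_iterate_dvd_sub_of_iterate_pow {f : ℤ_[p] → ℤ_[p]} {c : ℤ_[p]}
    (hc : ¬(p : ℤ_[p]) ∣ c) {k : ℕ} (htr : ∀ x y, ∃ m, (p : ℤ_[p]) ^ k ∣ f^[m] x - y)
    (hcycle : ∀ z, (p : ℤ_[p]) ^ (k + 1) ∣ f^[p ^ k] z - (z + p ^ k * c)) (x y : ℤ_[p]) :
    ∃ m, (p : ℤ_[p]) ^ (k + 1) ∣ f^[m] x - y := by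
  obtain ⟨i, t, ht⟩ := htr x y
  obtain ⟨j, hj⟩ := exists_nat_dvd_add_mul hc t
  refine ⟨j * p ^ k + i, ?_⟩
  have hsplit : f^[j * p ^ k + i] x - y =
      (f^[j * p ^ k] (f^[i] x) - (f^[i] x + j * (p ^ k * c))) + p ^ k * (t + j * c) := by
    rw [iterate_add_apply]
    linear_combination ht
  rw [hsplit]
  refine dvd_add (dvd_iterate_mul_sub hcycle j _) ?_
  rw [pow_succ]
  exact mul_dvd_mul_left _ hj

end

theorem stmt2 {p : ℕ} [Fact p.Prime] (v : ℤ_[p] → ℤ_[p]) (hv : IsCompatible v)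
    (c : ℤ_[p]) (hc : ¬ (p : ℤ_[p]) ∣ c) :
    ∀ k : ℕ, 1 ≤ k → TransitiveMod (fun x => c + x + p * (v (x + 1) - v x)) k := by
  have hh : IsCompatible fun x => c + x + p * (v (x + 1) - v x) :=
    (isCompatible_const_add c).add (((hv.comp_add_right 1).sub hv).const_mul p)
  suffices ∀ k, TransitiveMod (fun x => c + x + p * (v (x + 1) - v x)) k from fun k _ => this k
  intro k
  induction k with
  | zero => exact (transitiveMod_iff hh).2 fun _ _ => ⟨0, by simp⟩
  | succ k ih =>
    exact (transitiveMod_iff hh).2 <| exists_iterate_dvd_sub_of_iterate_pow hc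
      ((transitiveMod_iff hh).1 ih) (dvd_iterate_pow_sub_of_transitiveMod hv ih)
end

section
/- Let p be an odd prime, v : ℤ_p → ℤ_p a 1-Lipschitz (compatible) function, c ∈ ℤ_p with c not divisible by p, and r ∈ ℤ_p with r ≡ 1 (mod p). Then the function f(x) = c + r·x + p·(v(x+1) - v(x)) is transitive modulo p^k for every k ≥ 1. -/
namespace Stmt3Aux

variable {p : ℕ} [hp : Fact p.Prime]

lemma eq_iff_dvd (n : ℕ) (x y : ℤ_[p]) :
    PadicInt.toZModPow n x = PadicInt.toZModPow n y ↔ ((p : ℤ_[p]))^n ∣ (x - y) := by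
  rw [← sub_eq_zero, ← map_sub, ← RingHom.mem_ker, PadicInt.ker_toZModPow,
    Ideal.mem_span_singleton]

lemma eq_iff_norm (n : ℕ) (x y : ℤ_[p]) :
    PadicInt.toZModPow n x = PadicInt.toZModPow n y ↔ ‖x - y‖ ≤ (p:ℝ)^(-(n:ℤ)) := by
  rw [PadicInt.norm_le_pow_iff_mem_span_pow, Ideal.mem_span_singleton, eq_iff_dvd]

instance instNeZeroPow (n : ℕ) : NeZero (p ^ n) :=
  ⟨pow_ne_zero _ hp.out.pos.ne'⟩

/-- The induced map on `ZMod (p^n)` of a function on `ℤ_[p]`. -/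
noncomputable def ind (f : ℤ_[p] → ℤ_[p]) (n : ℕ) : ZMod (p ^ n) → ZMod (p ^ n) :=
  fun a => PadicInt.toZModPow n (f ((a.val : ℕ) : ℤ_[p]))

lemma toZModPow_natCast_val (n : ℕ) (a : ZMod (p ^ n)) :
    PadicInt.toZModPow n ((a.val : ℕ) : ℤ_[p]) = a := by
  rw [map_natCast]
  exact ZMod.natCast_rightInverse a

lemma ind_spec {f : ℤ_[p] → ℤ_[p]} (hf : IsCompatible f) (n : ℕ) (x : ℤ_[p]) :
    ind f n (PadicInt.toZModPow n x) = PadicInt.toZModPow n (f x) := by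
  unfold ind
  rw [eq_iff_norm]
  refine le_trans (hf _ _) ?_
  rw [← eq_iff_norm]
  exact toZModPow_natCast_val n _

lemma ind_iter {f : ℤ_[p] → ℤ_[p]} (hf : IsCompatible f) (n : ℕ) (m : ℕ) (x : ℤ_[p]) :
    (ind f n)^[m] (PadicInt.toZModPow n x) = PadicInt.toZModPow n (f^[m] x) := by
  induction m with
  | zero => simp
  | succ m ih =>
      rw [Function.iterate_succ_apply', Function.iterate_succ_apply', ih, ind_spec hf]

lemma exists_nat_mul {n : ℕ} [NeZero n] {u : ZMod n} (hu : IsUnit u) (d : ZMod n) :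
    ∃ m : ℕ, (m : ZMod n) * u = d := by
  refine ⟨(d * ↑hu.unit⁻¹).val, ?_⟩
  rw [ZMod.natCast_rightInverse _]
  calc d * ↑hu.unit⁻¹ * u = d * (↑hu.unit⁻¹ * ↑hu.unit) := by rw [hu.unit_spec]; ring
  _ = d := by rw [Units.inv_mul, mul_one]

lemma sum_univ_eq_zero {n : ℕ} [NeZero n] (hn : Nat.Coprime 2 n) :
    (∑ a : ZMod n, a) = 0 := by
  have h2 : IsUnit (2 : ZMod n) := by
    have := (ZMod.isUnit_iff_coprime 2 n).mpr hn
    simpa using this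
  have hneg : (∑ a : ZMod n, -a) = ∑ a : ZMod n, a :=
    Function.Bijective.sum_comp neg_involutive.bijective id
  have : (2 : ZMod n) * (∑ a : ZMod n, a) = 2 * 0 := by
    rw [mul_zero, two_mul]
    nth_rewrite 1 [← hneg]
    rw [← Finset.sum_add_distrib]
    simp
  exact h2.mul_left_cancel this

lemma natCast_fin_bij {n : ℕ} [NeZero n] :
    Function.Bijective (fun i : Fin n => ((i : ℕ) : ZMod n)) := by
  rw [Fintype.bijective_iff_surjective_and_card]
  constructor
  · intro a
    exact ⟨⟨a.val, a.val_lt⟩, ZMod.natCast_rightInverse a⟩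
  · simp [ZMod.card]

lemma sum_range_of_bij {n : ℕ} {β M : Type*} [Fintype β] [AddCommMonoid M]
    (E : ℕ → β) (hbij : Function.Bijective (fun i : Fin n => E (i : ℕ))) (F : β → M) :
    ∑ i ∈ Finset.range n, F (E i) = ∑ b : β, F b := by
  have h2 : ∑ i : Fin n, F (E (i : ℕ)) = ∑ i ∈ Finset.range n, F (E i) :=
    Fin.sum_univ_eq_sum_range (fun i => F (E i)) n
  rw [← h2]
  exact Function.Bijective.sum_comp hbij F

/-- If `g` is transitive on a nontrivial finite cyclic group `ZMod n`, the first `n`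
iterates starting anywhere form a bijection. -/
lemma orbit_bij {n : ℕ} [NeZero n] (g : ZMod n → ZMod n)
    (htrans : ∀ a b : ZMod n, ∃ m : ℕ, g^[m] a = b) (a : ZMod n) :
    Function.Bijective (fun i : Fin n => g^[(i : ℕ)] a) := by
  have hgsurj : Function.Surjective g := by
    intro b
    obtain ⟨m, hm⟩ := htrans (g b) b
    refine ⟨g^[m] b, ?_⟩
    have h := Function.iterate_succ_apply' g m b
    rw [← h, Function.iterate_succ_apply]
    exact hm
  have hginj : Function.Injective g := Finite.injective_iff_surjective.mpr hgsurj
  have key : ∀ i j : ℕ, i < j → j < n → g^[i] a = g^[j] a → False := by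
    intro i j hij hjn hEq
    set d := j - i with hd
    have hd0 : 0 < d := Nat.sub_pos_of_lt hij
    have hper : g^[d] a = a := by
      have : g^[i] (g^[d] a) = g^[i] a := by
        rw [← Function.iterate_add_apply]
        rw [hEq]
        congr 1
        omega
      exact (Function.Injective.iterate hginj i) this
    have hmod : ∀ m : ℕ, g^[m] a = g^[m % d] a := by
      intro m
      induction m using Nat.strong_induction_on with
      | _ m ih =>
        by_cases hmd : m < d
        · rw [Nat.mod_eq_of_lt hmd]
        · push_neg at hmd
          have h2 : g^[m] a = g^[m - d] a := by
            conv_lhs => rw [show m = (m - d) + d by omega]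
            rw [Function.iterate_add_apply, hper]
          rw [h2, ih (m - d) (by omega), Nat.mod_eq_sub_mod hmd]
    have hsurj : Function.Surjective (fun i : Fin d => g^[(i : ℕ)] a) := by
      intro b
      obtain ⟨m, hm⟩ := htrans a b
      exact ⟨⟨m % d, Nat.mod_lt _ hd0⟩, by simp [← hmod, hm]⟩
    have := Fintype.card_le_of_surjective _ hsurj
    simp [ZMod.card] at this
    omega
  rw [Fintype.bijective_iff_injective_and_card]
  refine ⟨?_, by simp [ZMod.card]⟩
  intro i j hEq
  rcases lt_trichotomy (i : ℕ) (j : ℕ) with h | h | h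
  · exact absurd hEq (fun hE => key i j h j.is_lt hE)
  · exact Fin.ext h
  · exact absurd hEq.symm (fun hE => key j i h i.is_lt hE)

end Stmt3Aux

open Stmt3Aux in
theorem stmt3 {p : ℕ} [Fact p.Prime] (hodd : p ≠ 2) (v : ℤ_[p] → ℤ_[p])
    (hv : IsCompatible v) (c r : ℤ_[p]) (hc : ¬ (p : ℤ_[p]) ∣ c)
    (hr : (p : ℤ_[p]) ∣ (r - 1)) :
    ∀ k : ℕ, 1 ≤ k → TransitiveMod (fun x => c + r * x + p * (v (x + 1) - v x)) k := by
  have hpp : p.Prime := Fact.out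
  have hp0 : (p : ℝ) ≠ 0 := by exact_mod_cast hpp.ne_zero
  set f : ℤ_[p] → ℤ_[p] := fun x => c + r * x + p * (v (x + 1) - v x) with hfdef
  -- f is compatible
  have hfc : IsCompatible f := by
    intro x y
    have h1 : f x - f y = r * (x - y) + (p * (v (x+1) - v (y+1)) + p * (v y - v x)) := by
      simp only [hfdef]; ring
    rw [h1]
    refine le_trans (PadicInt.nonarchimedean _ _) (max_le ?_ (le_trans
      (PadicInt.nonarchimedean _ _) (max_le ?_ ?_)))
    · rw [norm_mul]
      exact mul_le_of_le_one_left (norm_nonneg _) (PadicInt.norm_le_one r)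
    · rw [norm_mul]
      refine le_trans (mul_le_of_le_one_left (norm_nonneg _) (PadicInt.norm_le_one _)) ?_
      have h := hv (x+1) (y+1)
      have e : x + 1 - (y + 1) = x - y := by ring
      rwa [e] at h
    · rw [norm_mul]
      refine le_trans (mul_le_of_le_one_left (norm_nonneg _) (PadicInt.norm_le_one _)) ?_
      have h := hv y x
      rwa [norm_sub_rev y x] at h
  -- the image of c mod p is a unit
  have hc0 : PadicInt.toZModPow (p := p) 1 c ≠ 0 := by
    intro h0
    apply hc
    have h1 : PadicInt.toZModPow 1 c = PadicInt.toZModPow 1 (0 : ℤ_[p]) := by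
      rw [map_zero]; exact h0
    rw [eq_iff_dvd] at h1
    simpa using h1
  have hcu : IsUnit (PadicInt.toZModPow (p := p) 1 c) := by
    have h1 : (((PadicInt.toZModPow (p := p) 1 c).val : ℕ) : ZMod (p^1))
        = PadicInt.toZModPow 1 c := ZMod.natCast_rightInverse _
    have hco : Nat.Coprime ((PadicInt.toZModPow (p := p) 1 c).val) (p^1) := by
      refine Nat.Coprime.pow_right 1 ?_
      rw [Nat.coprime_comm, Nat.Prime.coprime_iff_not_dvd hpp]
      intro hdvd
      have hlt0 : (PadicInt.toZModPow (p := p) 1 c).val < p ^ 1 := ZMod.val_lt _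
      have hlt : (PadicInt.toZModPow (p := p) 1 c).val < p :=
        lt_of_lt_of_eq hlt0 (pow_one p)
      have hv0 : (PadicInt.toZModPow (p := p) 1 c).val = 0 := by
        rcases Nat.eq_zero_or_pos (PadicInt.toZModPow (p := p) 1 c).val with h | h
        · exact h
        · exact absurd (Nat.le_of_dvd h hdvd) (by omega)
      exact hc0 ((ZMod.val_eq_zero _).mp hv0)
    have h2 := (ZMod.isUnit_iff_coprime _ _).mpr hco
    rwa [h1] at h2
  -- mod p, f acts as translation by c
  have hstep1 : ∀ y : ℤ_[p],
      PadicInt.toZModPow 1 (f y) = PadicInt.toZModPow 1 y + PadicInt.toZModPow 1 c := by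
    intro y
    rw [← map_add, eq_iff_dvd, pow_one]
    have h1 : f y - (y + c) = (r - 1) * y + p * (v (y+1) - v y) := by
      simp only [hfdef]; ring
    rw [h1]
    exact dvd_add (hr.mul_right y) (dvd_mul_right _ _)
  have hiter1 : ∀ (m : ℕ) (x : ℤ_[p]),
      PadicInt.toZModPow 1 (f^[m] x)
        = PadicInt.toZModPow 1 x + m • PadicInt.toZModPow 1 c := by
    intro m x
    induction m with
    | zero => simp
    | succ m ihm =>
        rw [Function.iterate_succ_apply', hstep1, ihm, succ_nsmul, add_assoc]
  -- main claim, by induction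
  suffices H : ∀ k : ℕ, 1 ≤ k → ∀ a b : ZMod (p^k), ∃ m : ℕ, (ind f k)^[m] a = b by
    intro k hk
    exact ⟨ind f k, fun x => ind_spec hfc k x, H k hk⟩
  intro k hk
  induction k, hk using Nat.le_induction with
  | base =>
      intro a b
      obtain ⟨m, hm⟩ := exists_nat_mul hcu (b - a)
      refine ⟨m, ?_⟩
      have ha : PadicInt.toZModPow 1 ((a.val : ℕ) : ℤ_[p]) = a := toZModPow_natCast_val 1 a
      rw [← ha, ind_iter hfc, hiter1, ha, nsmul_eq_mul, hm]
      ring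
  | succ k hk ih =>
      -- norm bound on (r - 1)
      have hr1 : ‖r - 1‖ ≤ (p:ℝ)⁻¹ := by
        have h : ‖r - 1‖ ≤ (p:ℝ)^(-((1:ℕ):ℤ)) := by
          rw [PadicInt.norm_le_pow_iff_mem_span_pow, Ideal.mem_span_singleton, pow_one]
          exact hr
        simpa using h
      have harith : (p:ℝ)^(-(k:ℤ)) * (p:ℝ)⁻¹ = (p:ℝ)^(-((k+1:ℕ):ℤ)) := by
        rw [← zpow_neg_one, ← zpow_add₀ hp0]
        congr 1
        push_cast
        ring
      -- the induced map mod p^k and orbit bijections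
      set g : ZMod (p^k) → ZMod (p^k) := ind f k with hgdef
      -- sum of all residues mod p^k is 0
      have hcop : Nat.Coprime 2 (p^k) :=
        Nat.Coprime.pow_right k ((Nat.coprime_primes Nat.prime_two hpp).mpr (Ne.symm hodd))
      have hsumzero : (∑ a : ZMod (p^k), a) = 0 := sum_univ_eq_zero hcop
      -- induced difference-of-v map mod p^k
      set D : ZMod (p^k) → ZMod (p^k) :=
        fun a => PadicInt.toZModPow k (v ((a.val : ℕ) + 1 : ℤ_[p]) - v ((a.val : ℕ) : ℤ_[p]))
        with hDdef
      have hDspec : ∀ y : ℤ_[p],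
          D (PadicInt.toZModPow k y) = PadicInt.toZModPow k (v (y+1) - v y) := by
        intro y
        have hl : PadicInt.toZModPow k (((PadicInt.toZModPow k y).val : ℕ) : ℤ_[p])
            = PadicInt.toZModPow k y := toZModPow_natCast_val k _
        set l : ℤ_[p] := (((PadicInt.toZModPow k y).val : ℕ) : ℤ_[p]) with hldef
        rw [hDdef]
        simp only
        rw [eq_iff_norm]
        have hnorm : ‖l - y‖ ≤ (p:ℝ)^(-(k:ℤ)) := (eq_iff_norm k l y).mp hl
        have e1 : ‖v (l+1) - v (y+1)‖ ≤ (p:ℝ)^(-(k:ℤ)) := by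
          refine le_trans (hv _ _) ?_
          have e : l + 1 - (y + 1) = l - y := by ring
          rwa [e]
        have e2 : ‖v y - v l‖ ≤ (p:ℝ)^(-(k:ℤ)) := by
          refine le_trans (hv _ _) ?_
          rwa [norm_sub_rev]
        have hsplit : (v (l+1) - v l) - (v (y+1) - v y)
            = (v (l+1) - v (y+1)) + (v y - v l) := by ring
        rw [hsplit]
        exact le_trans (PadicInt.nonarchimedean _ _) (max_le e1 e2)
      -- telescoping: sum of D over all residues is 0
      have hD0 : ∑ a : ZMod (p^k), D a = 0 := by
        have hreidx : ∑ i ∈ Finset.range (p^k), D ((i : ZMod (p^k)))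
            = ∑ a : ZMod (p^k), D a :=
          sum_range_of_bij (fun i : ℕ => ((i : ZMod (p^k)))) natCast_fin_bij D
        rw [← hreidx]
        have h1 : ∀ i ∈ Finset.range (p^k), D (((i:ℕ) : ZMod (p^k)))
            = PadicInt.toZModPow k (v (((i:ℕ):ℤ_[p]) + 1) - v ((i:ℕ):ℤ_[p])) := by
          intro i _
          rw [← map_natCast (PadicInt.toZModPow k) (i:ℕ), hDspec]
        rw [Finset.sum_congr rfl h1, ← map_sum]
        have htel : ∑ i ∈ Finset.range (p^k), (v (((i:ℕ):ℤ_[p]) + 1) - v ((i:ℕ):ℤ_[p]))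
            = v (((p^k : ℕ) : ℤ_[p])) - v 0 := by
          have h := Finset.sum_range_sub (fun i : ℕ => v ((i:ℕ) : ℤ_[p])) (p^k)
          push_cast at h ⊢
          exact h
        rw [htel]
        rw [show (0 : ZMod (p^k)) = PadicInt.toZModPow k (0 : ℤ_[p]) from (map_zero _).symm,
          eq_iff_norm]
        have h2 : ‖v ((p^k : ℕ) : ℤ_[p]) - v 0‖ ≤ (p:ℝ)^(-(k:ℤ)) := by
          refine le_trans (hv _ _) ?_
          rw [sub_zero]
          rw [show ((p^k : ℕ) : ℤ_[p]) = ((p : ℤ_[p]))^k by push_cast; ring]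
          rw [PadicInt.norm_p_pow]
        rwa [sub_zero]
      -- the key congruence: f^[p^k] x ≡ x + p^k c  (mod p^(k+1))
      have key : ∀ x : ℤ_[p], PadicInt.toZModPow (k+1) (f^[p^k] x)
          = PadicInt.toZModPow (k+1) x + PadicInt.toZModPow (k+1) (((p:ℤ_[p]))^k * c) := by
        intro x
        have hbij := orbit_bij g ih (PadicInt.toZModPow k x)
        -- sum of iterates is 0 mod p^k
        have hS1 : PadicInt.toZModPow k (∑ i ∈ Finset.range (p^k), f^[i] x) = 0 := by
          rw [map_sum]
          have h1 : ∀ i ∈ Finset.range (p^k),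
              PadicInt.toZModPow k (f^[i] x) = g^[i] (PadicInt.toZModPow k x) :=
            fun i _ => (ind_iter hfc k i x).symm
          rw [Finset.sum_congr rfl h1]
          have hreidx : ∑ i ∈ Finset.range (p^k), (g^[i] (PadicInt.toZModPow k x))
              = ∑ a : ZMod (p^k), a :=
            sum_range_of_bij (fun i : ℕ => g^[i] (PadicInt.toZModPow k x)) hbij (fun a => a)
          rw [hreidx]
          exact hsumzero
        have hS1norm : ‖∑ i ∈ Finset.range (p^k), f^[i] x‖ ≤ (p:ℝ)^(-(k:ℤ)) := by
          have h := (eq_iff_norm k (∑ i ∈ Finset.range (p^k), f^[i] x) 0).mp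
            (by rw [map_zero]; exact hS1)
          rwa [sub_zero] at h
        -- sum of v-differences along the orbit is 0 mod p^k
        have hS2 : PadicInt.toZModPow k
            (∑ i ∈ Finset.range (p^k), (v (f^[i] x + 1) - v (f^[i] x))) = 0 := by
          rw [map_sum]
          have h1 : ∀ i ∈ Finset.range (p^k),
              PadicInt.toZModPow k (v (f^[i] x + 1) - v (f^[i] x))
                = D (g^[i] (PadicInt.toZModPow k x)) := by
            intro i _
            rw [ind_iter hfc k i x, hDspec]
          rw [Finset.sum_congr rfl h1]
          have hreidx : ∑ i ∈ Finset.range (p^k), D (g^[i] (PadicInt.toZModPow k x))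
              = ∑ a : ZMod (p^k), D a :=
            sum_range_of_bij (fun i : ℕ => g^[i] (PadicInt.toZModPow k x)) hbij D
          rw [hreidx]
          exact hD0
        have hS2norm : ‖∑ i ∈ Finset.range (p^k), (v (f^[i] x + 1) - v (f^[i] x))‖
            ≤ (p:ℝ)^(-(k:ℤ)) := by
          have h := (eq_iff_norm k
            (∑ i ∈ Finset.range (p^k), (v (f^[i] x + 1) - v (f^[i] x))) 0).mp
            (by rw [map_zero]; exact hS2)
          rwa [sub_zero] at h
        -- the algebraic identity
        have hdiff : f^[p^k] x - (x + ((p:ℤ_[p]))^k * c)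
            = (r - 1) * (∑ i ∈ Finset.range (p^k), f^[i] x)
              + p * (∑ i ∈ Finset.range (p^k), (v (f^[i] x + 1) - v (f^[i] x))) := by
          have h1 : ∑ i ∈ Finset.range (p^k), (f (f^[i] x) - f^[i] x) = f^[p^k] x - x := by
            have h := Finset.sum_range_sub (fun i => f^[i] x) (p^k)
            simp only [Function.iterate_succ_apply'] at h
            simpa using h
          have h2 : ∀ i ∈ Finset.range (p^k), f (f^[i] x) - f^[i] x
              = c + ((r - 1) * (f^[i] x) + p * (v (f^[i] x + 1) - v (f^[i] x))) := by
            intro i _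
            simp only [hfdef]
            ring
          rw [Finset.sum_congr rfl h2] at h1
          rw [Finset.sum_add_distrib, Finset.sum_add_distrib, Finset.sum_const,
            Finset.card_range, ← Finset.mul_sum, ← Finset.mul_sum] at h1
          have hN : (p^k) • c = ((p:ℤ_[p]))^k * c := by
            rw [nsmul_eq_mul]
            push_cast
            ring
          rw [hN] at h1
          have := h1
          linear_combination -this
        rw [← map_add, eq_iff_norm, hdiff]
        refine le_trans (PadicInt.nonarchimedean _ _) (max_le ?_ ?_)
        · rw [norm_mul]
          calc ‖r - 1‖ * ‖∑ i ∈ Finset.range (p^k), f^[i] x‖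
              ≤ (p:ℝ)⁻¹ * (p:ℝ)^(-(k:ℤ)) := by
                exact mul_le_mul hr1 hS1norm (norm_nonneg _) (by positivity)
            _ = (p:ℝ)^(-((k+1:ℕ):ℤ)) := by rw [mul_comm]; exact harith
        · rw [norm_mul, PadicInt.norm_p]
          calc (p:ℝ)⁻¹ * ‖∑ i ∈ Finset.range (p^k), (v (f^[i] x + 1) - v (f^[i] x))‖
              ≤ (p:ℝ)⁻¹ * (p:ℝ)^(-(k:ℤ)) := by
                refine mul_le_mul_of_nonneg_left hS2norm (by positivity)
            _ = (p:ℝ)^(-((k+1:ℕ):ℤ)) := by rw [mul_comm]; exact harith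
      -- iterating the key congruence
      have hmul : ∀ (m : ℕ) (x : ℤ_[p]), PadicInt.toZModPow (k+1) (f^[m * p^k] x)
          = PadicInt.toZModPow (k+1) x
            + m • PadicInt.toZModPow (k+1) (((p:ℤ_[p]))^k * c) := by
        intro m x
        induction m with
        | zero => simp
        | succ m ihm =>
            rw [show (m+1) * p^k = p^k + m * p^k by ring, Function.iterate_add_apply,
              key, ihm, succ_nsmul, add_assoc]
      -- conclude transitivity mod p^(k+1)
      intro a b
      set x : ℤ_[p] := ((a.val : ℕ) : ℤ_[p]) with hxdef
      set y : ℤ_[p] := ((b.val : ℕ) : ℤ_[p]) with hydef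
      obtain ⟨i, hi⟩ := ih (PadicInt.toZModPow k x) (PadicInt.toZModPow k y)
      have hi' : PadicInt.toZModPow k (f^[i] x) = PadicInt.toZModPow k y := by
        rw [← ind_iter hfc, hi]
      obtain ⟨t, ht⟩ := (eq_iff_dvd k (f^[i] x) y).mp hi'
      obtain ⟨m, hm⟩ := exists_nat_mul hcu (PadicInt.toZModPow 1 (-t))
      refine ⟨i + m * p^k, ?_⟩
      have ha : PadicInt.toZModPow (k+1) x = a := toZModPow_natCast_val _ a
      have hb2 : PadicInt.toZModPow (k+1) y = b := toZModPow_natCast_val _ b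
      rw [← ha, ind_iter hfc, show i + m * p^k = m * p^k + i by ring,
        Function.iterate_add_apply, hmul, ← hb2]
      have hy : y = f^[i] x + ((p:ℤ_[p]))^k * (-t) := by
        rw [mul_neg, ← ht]
        ring
      rw [hy, map_add]
      congr 1
      rw [← map_nsmul, eq_iff_norm]
      have hsplit : (p^k : ℕ) • (((p:ℤ_[p]))^k * c) - ((p:ℤ_[p]))^k * (-t)
          = ((p:ℤ_[p]))^k * (((p^k : ℕ) : ℤ_[p]) * c + t) := by
        rw [nsmul_eq_mul]
        ring
      have hsplit2 : m • (((p:ℤ_[p]))^k * c) - ((p:ℤ_[p]))^k * (-t)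
          = ((p:ℤ_[p]))^k * ((m : ℤ_[p]) * c + t) := by
        rw [nsmul_eq_mul]
        ring
      rw [hsplit2, norm_mul, PadicInt.norm_p_pow]
      have hmc : PadicInt.toZModPow 1 ((m : ℤ_[p]) * c + t)
          = PadicInt.toZModPow 1 (0 : ℤ_[p]) := by
        rw [map_zero, map_add, map_mul, map_natCast, hm, ← map_add]
        simp
      have hnm : ‖(m : ℤ_[p]) * c + t‖ ≤ (p:ℝ)^(-((1:ℕ):ℤ)) := by
        have h := (eq_iff_norm 1 ((m : ℤ_[p]) * c + t) 0).mp hmc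
        rwa [sub_zero] at h
      calc (p:ℝ)^(-(k:ℤ)) * ‖(m : ℤ_[p]) * c + t‖
          ≤ (p:ℝ)^(-(k:ℤ)) * (p:ℝ)⁻¹ := by
            refine mul_le_mul_of_nonneg_left ?_ (by positivity)
            simpa using hnm
        _ = (p:ℝ)^(-((k+1:ℕ):ℤ)) := harith
end

section
/- For p = 2, a function f : ℤ_2 → ℤ_2 is compatible and bijective modulo 2^k for all k ≥ 1 if and only if it can be represented in the form f(x) = c + x + 2·v(x), where c ∈ ℤ_2 and v : ℤ_2 → ℤ_2 is a compatible (1-Lipschitz) function. -/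
/-! A compatible map that is bijective modulo every `2^k` cannot shrink a distance `2^-k`
(two points that are distinct modulo `2^(k+1)` keep distinct images), so it is an isometry;
conversely an isometry is compatible and injective, hence bijective, modulo every `2^k`.
Since every unit of `ℤ_2` is `1` modulo `2`, two elements of equal norm differ by an element of
at most half that norm. Hence `f` is an isometry iff `x ↦ f x - x` contracts distances by the
factor `1/2`, i.e. iff `f x - x = c + 2 v(x)` with `v` compatible. -/

namespace PadicInt

variable {p : ℕ} [Fact p.Prime]

theorem toZModPow_eq_iff_norm_sub_le (k : ℕ) (x y : ℤ_[p]) :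
    toZModPow k x = toZModPow k y ↔ ‖x - y‖ ≤ (p : ℝ) ^ (-(k : ℤ)) := by
  rw [← sub_eq_zero, ← map_sub, ← RingHom.mem_ker, ker_toZModPow,
    ← norm_le_pow_iff_mem_span_pow]

theorem norm_le_of_forall_norm_le_pow {a b : ℤ_[p]}
    (h : ∀ k : ℕ, 1 ≤ k → ‖b‖ ≤ (p : ℝ) ^ (-(k : ℤ)) → ‖a‖ ≤ (p : ℝ) ^ (-(k : ℤ))) :
    ‖a‖ ≤ ‖b‖ := by
  by_contra! hlt
  have ha : a ≠ 0 := by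
    rintro rfl
    exact (norm_nonneg b).not_gt (by simpa using hlt)
  set n := a.valuation
  have hna : ‖a‖ = (p : ℝ) ^ (-(n : ℤ)) := norm_eq_zpow_neg_valuation ha
  have hnb : ‖b‖ ≤ (p : ℝ) ^ (-((n + 1 : ℕ) : ℤ)) := by
    have := (norm_lt_pow_iff_norm_le_pow_sub_one b (-(n : ℤ))).mp (hna ▸ hlt)
    rwa [show -(n : ℤ) - 1 = -((n + 1 : ℕ) : ℤ) by push_cast; ring] at this
  have hp : (1 : ℝ) < p := by exact_mod_cast (Fact.out : p.Prime).one_lt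
  have hpow : (p : ℝ) ^ (-((n + 1 : ℕ) : ℤ)) < (p : ℝ) ^ (-(n : ℤ)) :=
    zpow_lt_zpow_right₀ hp (by push_cast; omega)
  have := h (n + 1) (by omega) hnb
  linarith

theorem norm_units_sub_le (u w : ℤ_[2]ˣ) : ‖(u - w : ℤ_[2])‖ ≤ 2⁻¹ := by
  have : Subsingleton (ZMod (2 ^ 1))ˣ := inferInstanceAs (Subsingleton (ZMod 2)ˣ)
  have h : toZModPow 1 (u : ℤ_[2]) = toZModPow 1 (w : ℤ_[2]) :=
    congrArg Units.val (Subsingleton.elim (Units.map (toZModPow 1).toMonoidHom u) (Units.map _ w))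
  simpa using (toZModPow_eq_iff_norm_sub_le 1 _ _).mp h

theorem norm_sub_le_of_norm_eq {a b : ℤ_[2]} (h : ‖a‖ = ‖b‖) : ‖a - b‖ ≤ 2⁻¹ * ‖b‖ := by
  rcases eq_or_ne b 0 with rfl | hb
  · simp_all
  have ha : a ≠ 0 := by
    rintro rfl
    simp_all [eq_comm]
  have hv : a.valuation = b.valuation := by
    rw [norm_eq_zpow_neg_valuation ha, norm_eq_zpow_neg_valuation hb] at h
    exact_mod_cast neg_inj.mp (zpow_right_injective₀ (by norm_num) (by norm_num) h)
  have hsub : a - b = (unitCoeff ha - unitCoeff hb : ℤ_[2]) * (2 : ℕ) ^ b.valuation := by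
    conv_lhs => rw [unitCoeff_spec ha, unitCoeff_spec hb, hv]
    ring
  conv_rhs => rw [unitCoeff_spec hb, norm_mul, norm_units, one_mul]
  rw [hsub, norm_mul]
  exact mul_le_mul_of_nonneg_right (norm_units_sub_le _ _) (norm_nonneg _)

theorem exists_isCompatible_iff_norm_sub_le (g : ℤ_[p] → ℤ_[p]) :
    (∃ (c : ℤ_[p]) (v : ℤ_[p] → ℤ_[p]), IsCompatible v ∧ ∀ x, g x = c + p * v x) ↔
      ∀ x y, ‖g x - g y‖ ≤ (p : ℝ)⁻¹ * ‖x - y‖ := by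
  have hp : (1 : ℝ) < p := by exact_mod_cast (Fact.out : p.Prime).one_lt
  constructor
  · rintro ⟨c, v, hv, hg⟩ x y
    rw [hg, hg, add_sub_add_left_eq_sub, ← mul_sub, norm_mul, norm_p]
    exact mul_le_mul_of_nonneg_left (hv x y) (by positivity)
  · intro hg
    have hdvd (x : ℤ_[p]) : (p : ℤ_[p]) ∣ g x - g 0 := by
      rw [← norm_lt_one_iff_dvd]
      calc ‖g x - g 0‖ ≤ (p : ℝ)⁻¹ * ‖x - 0‖ := hg x 0
        _ ≤ (p : ℝ)⁻¹ := mul_le_of_le_one_right (by positivity) (norm_le_one _)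
        _ < 1 := inv_lt_one_of_one_lt₀ hp
    choose v hv using hdvd
    refine ⟨g 0, v, fun x y => ?_, fun x => by linear_combination hv x⟩
    have := hg x y
    rw [show g x - g y = p * (v x - v y) by linear_combination hv x - hv y, norm_mul,
      norm_p] at this
    exact le_of_mul_le_mul_left this (by positivity)

end PadicInt

open PadicInt

section

variable {p : ℕ} [Fact p.Prime] {f : ℤ_[p] → ℤ_[p]}

theorem BijectiveMod.toZModPow_eq_of_map_eq {k : ℕ} (hf : BijectiveMod f k) {x y : ℤ_[p]}
    (h : toZModPow k (f x) = toZModPow k (f y)) : toZModPow k x = toZModPow k y := by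
  obtain ⟨g, hg, hinj, -⟩ := hf
  exact hinj (by rw [hg, hg, h])

theorem norm_sub_le_norm_map_sub_of_bijectiveMod (hf : ∀ k : ℕ, 1 ≤ k → BijectiveMod f k)
    (x y : ℤ_[p]) : ‖x - y‖ ≤ ‖f x - f y‖ :=
  norm_le_of_forall_norm_le_pow fun k hk h => by
    rw [← toZModPow_eq_iff_norm_sub_le] at h ⊢
    exact (hf k hk).toZModPow_eq_of_map_eq h

theorem Isometry.norm_map_sub (hf : Isometry f) (x y : ℤ_[p]) : ‖f x - f y‖ = ‖x - y‖ := by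
  simpa only [dist_eq_norm] using hf.dist_eq x y

theorem Isometry.isCompatible (hf : Isometry f) : IsCompatible f := fun x y =>
  (hf.norm_map_sub x y).le

theorem Isometry.bijectiveMod (hf : Isometry f) (k : ℕ) : BijectiveMod f k := by
  have hmod (x y : ℤ_[p]) :
      toZModPow k (f x) = toZModPow k (f y) ↔ toZModPow k x = toZModPow k y := by
    simp only [toZModPow_eq_iff_norm_sub_le, hf.norm_map_sub]
  have hsec (a : ZMod (p ^ k)) : toZModPow k (a.val : ℤ_[p]) = a := by
    rw [map_natCast, ZMod.natCast_zmod_val]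
  refine ⟨fun a => toZModPow k (f (a.val : ℤ_[p])), fun x => (hmod _ _).mpr (hsec _), ?_⟩
  rw [← Finite.injective_iff_bijective]
  intro a b hab
  rw [← hsec a, ← hsec b]
  exact (hmod _ _).mp hab

theorem isCompatible_and_bijectiveMod_iff_isometry :
    (IsCompatible f ∧ ∀ k : ℕ, 1 ≤ k → BijectiveMod f k) ↔ Isometry f :=
  ⟨fun ⟨hc, hb⟩ => Isometry.of_dist_eq fun x y => by
      simpa only [dist_eq_norm] using
        (hc x y).antisymm (norm_sub_le_norm_map_sub_of_bijectiveMod hb x y),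
    fun hf => ⟨hf.isCompatible, fun k _ => hf.bijectiveMod k⟩⟩

end

theorem isometry_iff_norm_sub_sub_le (f : ℤ_[2] → ℤ_[2]) :
    Isometry f ↔ ∀ x y, ‖(f x - x) - (f y - y)‖ ≤ 2⁻¹ * ‖x - y‖ := by
  refine ⟨fun hf x y => ?_, fun h => Isometry.of_dist_eq fun x y => ?_⟩
  · rw [sub_sub_sub_comm]
    exact norm_sub_le_of_norm_eq (hf.norm_map_sub x y)
  · rcases eq_or_ne x y with rfl | hxy
    · simp
    have hlt : ‖(f x - x) - (f y - y)‖ < ‖x - y‖ :=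
      (h x y).trans_lt (by have := norm_pos_iff.mpr (sub_ne_zero.mpr hxy); linarith)
    rw [dist_eq_norm, dist_eq_norm,
      show f x - f y = (f x - x) - (f y - y) + (x - y) by ring,
      IsUltrametricDist.norm_add_eq_max_of_norm_ne_norm hlt.ne, max_eq_right hlt.le]

theorem stmt5 (f : ℤ_[2] → ℤ_[2]) :
    (IsCompatible f ∧ ∀ k : ℕ, 1 ≤ k → BijectiveMod f k) ↔
      ∃ (c : ℤ_[2]) (v : ℤ_[2] → ℤ_[2]), IsCompatible v ∧
        ∀ x : ℤ_[2], f x = c + x + 2 * v x := by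
  rw [isCompatible_and_bijectiveMod_iff_isometry, isometry_iff_norm_sub_sub_le]
  have h := exists_isCompatible_iff_norm_sub_le (fun x => f x - x)
  simp only [Nat.cast_ofNat, sub_eq_iff_eq_add, add_right_comm _ ((2 : ℤ_[2]) * _)] at h
  exact h.symm
end

section
/- Let f : ℤ_p → ℤ_p be uniformly differentiable modulo p with integer-valued derivative modulo p, and suppose f is bijective modulo p^k for all sufficiently large k (asymptotically preserves measure). Then the derivative modulo p of f satisfies ‖f'_1(u)‖_p ≥ 1 at every point u ∈ ℤ_p (equivalently, f'_1(u) is not divisible by p). -/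
/-- `f` is uniformly differentiable modulo `p` with (integer-valued) derivative `f'`
and threshold `N`. -/
def UnifDiffMod1 {p : ℕ} [Fact p.Prime] (f f' : ℤ_[p] → ℤ_[p]) (N : ℕ) : Prop :=
  ∀ (u h : ℤ_[p]) (K : ℕ), N ≤ K → ‖h‖ ≤ (p : ℝ) ^ (-(K : ℤ)) →
    ‖f (u + h) - (f u + h * f' u)‖ ≤ (p : ℝ) ^ (-(K + 1) : ℤ)

theorem stmt7 {p : ℕ} [Fact p.Prime] (f f' : ℤ_[p] → ℤ_[p]) (N : ℕ)
    (hdiff : UnifDiffMod1 f f' N)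
    (hbij : ∃ K : ℕ, ∀ k : ℕ, K ≤ k → BijectiveMod f k) :
    ∀ u : ℤ_[p], 1 ≤ ‖f' u‖ := by
  have hp : (1:ℝ) < p := by exact_mod_cast (Fact.out : p.Prime).one_lt
  intro u
  by_contra hlt
  push_neg at hlt
  have hdvd : (p : ℤ_[p]) ∣ f' u := PadicInt.norm_lt_one_iff_dvd _ |>.mp hlt
  obtain ⟨c, hc⟩ := hdvd
  obtain ⟨K₀, hK₀⟩ := hbij
  set K : ℕ := max N K₀ with hK
  obtain ⟨g, hg, hgbij⟩ := hK₀ (K + 1) (le_trans (le_max_right _ _) (Nat.le_succ _))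
  set h : ℤ_[p] := (p : ℤ_[p]) ^ K with hh
  have hnh : ‖h‖ = (p : ℝ) ^ (-(K : ℤ)) := PadicInt.norm_p_pow K
  have h1 := hdiff u h K (le_max_left _ _) (le_of_eq hnh)
  -- ‖h * f' u‖ ≤ p^{-(K+1)}
  have h2 : ‖h * f' u‖ ≤ (p : ℝ) ^ (-(K + 1) : ℤ) := by
    rw [hc, ← mul_assoc]
    calc ‖h * (p : ℤ_[p]) * c‖ ≤ ‖h * (p : ℤ_[p])‖ * 1 := by
          rw [norm_mul]
          exact mul_le_mul_of_nonneg_left c.norm_le_one (norm_nonneg _)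
      _ = ‖(p : ℤ_[p]) ^ (K + 1)‖ := by rw [mul_one, hh, ← pow_succ]
      _ = (p : ℝ) ^ (-(K + 1) : ℤ) := by
          rw [PadicInt.norm_p_pow]; push_cast; ring_nf
  have h3 : ‖f (u + h) - f u‖ ≤ (p : ℝ) ^ (-(K + 1) : ℤ) := by
    have : f (u + h) - f u = (f (u + h) - (f u + h * f' u)) + h * f' u := by ring
    rw [this]
    exact le_trans (PadicInt.nonarchimedean _ _) (max_le h1 h2)
  -- so images agree mod p^(K+1)
  have hmem : f (u + h) - f u ∈ Ideal.span {(p : ℤ_[p]) ^ (K + 1)} := by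
    have := (PadicInt.norm_le_pow_iff_mem_span_pow (f (u + h) - f u) (K + 1)).mp
    apply this
    exact_mod_cast h3
  have heq : PadicInt.toZModPow (K + 1) (f (u + h)) = PadicInt.toZModPow (K + 1) (f u) := by
    rw [← sub_eq_zero, ← map_sub, ← RingHom.mem_ker, PadicInt.ker_toZModPow]
    exact hmem
  have heq2 : PadicInt.toZModPow (K + 1) (u + h) = PadicInt.toZModPow (K + 1) u :=
    hgbij.injective (by rw [hg, hg, heq])
  -- hence h ≡ 0 mod p^(K+1), contradiction
  have hzero : PadicInt.toZModPow (K + 1) h = 0 := by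
    have : PadicInt.toZModPow (K + 1) (u + h) - PadicInt.toZModPow (K + 1) u = 0 := by
      rw [heq2, sub_self]
    rwa [← map_sub, add_sub_cancel_left] at this
  have hmem2 : h ∈ Ideal.span {(p : ℤ_[p]) ^ (K + 1)} := by
    rw [← PadicInt.ker_toZModPow]; exact hzero
  have hle : ‖h‖ ≤ (p : ℝ) ^ (-(K + 1 : ℕ) : ℤ) :=
    (PadicInt.norm_le_pow_iff_mem_span_pow h (K + 1)).mpr hmem2
  rw [hnh] at hle
  have : (-(K + 1 : ℕ) : ℤ) < (-(K : ℤ)) := by push_cast; omega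
  exact absurd hle (not_le.mpr (by
    calc (p:ℝ) ^ (-(K + 1 : ℕ) : ℤ) < (p:ℝ) ^ (-(K : ℤ)) := zpow_lt_zpow_right₀ hp this
      _ = (p:ℝ) ^ (-(K : ℤ)) := rfl))
end

section
/- Let F : ℤ_p^n → ℤ_p^n be uniformly differentiable modulo p with integer-valued partial derivatives modulo p. Then F is bijective modulo p^k for all sufficiently large k if and only if F is bijective modulo p^{N_1(F)} and the Jacobian determinant of F modulo p vanishes modulo p at no point of (ℤ/p^{N_1(F)})^n. -/
/-- `F` is bijective modulo `p^k`: it induces a bijection of `(ZMod (p^k))^n`. -/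
def BijectiveModVec {p : ℕ} [Fact p.Prime] {n : ℕ}
    (F : (Fin n → ℤ_[p]) → (Fin n → ℤ_[p])) (k : ℕ) : Prop :=
  ∃ g : (Fin n → ZMod (p ^ k)) → (Fin n → ZMod (p ^ k)),
    (∀ x : Fin n → ℤ_[p],
      g (fun i => PadicInt.toZModPow k (x i)) = fun i => PadicInt.toZModPow k (F x i)) ∧
    Function.Bijective g

/-- `F` is uniformly differentiable modulo `p` with (integer-valued) Jacobi matrix `J`
and threshold `N`. -/
def UnifDiffModVec {p : ℕ} [Fact p.Prime] {n : ℕ}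
    (F : (Fin n → ℤ_[p]) → (Fin n → ℤ_[p]))
    (J : (Fin n → ℤ_[p]) → Matrix (Fin n) (Fin n) ℤ_[p]) (N : ℕ) : Prop :=
  ∀ (u h : Fin n → ℤ_[p]) (K : ℕ), N ≤ K → (∀ i, ‖h i‖ ≤ (p : ℝ) ^ (-(K : ℤ))) →
    ∀ i, ‖F (u + h) i - (F u i + ∑ j, h j * J u j i)‖ ≤ (p : ℝ) ^ (-(K + 1) : ℤ)

section Stmt8Aux

variable {p : ℕ} [hp : Fact p.Prime]

private lemma s8_norm_le_iff_dvd (k : ℕ) (x : ℤ_[p]) :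
    ‖x‖ ≤ (p : ℝ) ^ (-(k : ℤ)) ↔ (p : ℤ_[p]) ^ k ∣ x := by
  rw [PadicInt.norm_le_pow_iff_mem_span_pow, Ideal.mem_span_singleton]

private lemma s8_red_eq_iff (k : ℕ) (a b : ℤ_[p]) :
    PadicInt.toZModPow k a = PadicInt.toZModPow k b ↔ (p : ℤ_[p]) ^ k ∣ (a - b) := by
  rw [← sub_eq_zero, ← map_sub, ← RingHom.mem_ker, PadicInt.ker_toZModPow,
    Ideal.mem_span_singleton]

private lemma s8_red_lift (k : ℕ) (x : ZMod (p ^ k)) :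
    PadicInt.toZModPow k ((x.val : ℤ_[p])) = x := by
  haveI : NeZero (p ^ k) := ⟨pow_ne_zero k hp.out.ne_zero⟩
  rw [map_natCast]
  exact ZMod.natCast_rightInverse x

private lemma s8_toZMod_lift (x : ZMod p) : PadicInt.toZMod ((x.val : ℤ_[p])) = x := by
  haveI : NeZero p := ⟨hp.out.ne_zero⟩
  rw [map_natCast]
  exact ZMod.natCast_rightInverse x

private lemma s8_toZMod_eq_zero_iff (x : ℤ_[p]) :
    PadicInt.toZMod x = 0 ↔ (p : ℤ_[p]) ∣ x := by
  rw [← RingHom.mem_ker, PadicInt.ker_toZMod, PadicInt.maximalIdeal_eq_span_p,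
    Ideal.mem_span_singleton]

end Stmt8Aux

theorem stmt8 {p : ℕ} [Fact p.Prime] {n : ℕ}
    (F : (Fin n → ℤ_[p]) → (Fin n → ℤ_[p]))
    (J : (Fin n → ℤ_[p]) → Matrix (Fin n) (Fin n) ℤ_[p]) (N : ℕ)
    (hdiff : UnifDiffModVec F J N) :
    (∃ K : ℕ, ∀ k : ℕ, K ≤ k → BijectiveModVec F k) ↔
      (BijectiveModVec F N ∧ ∀ u : Fin n → ℤ_[p], ¬ (p : ℤ_[p]) ∣ (J u).det) := by
  classical
  have hppos : p ≠ 0 := (Fact.out : p.Prime).ne_zero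
  have hpne : (p : ℤ_[p]) ≠ 0 := Nat.cast_ne_zero.2 hppos
  -- divisibility form of the differentiability hypothesis
  have hd2 : ∀ (u h : Fin n → ℤ_[p]) (K : ℕ), N ≤ K → (∀ j, (p : ℤ_[p]) ^ K ∣ h j) →
      ∀ i, (p : ℤ_[p]) ^ (K + 1) ∣ (F (u + h) i - (F u i + ∑ j, h j * J u j i)) := by
    intro u h K hK hdvd i
    have hle := hdiff u h K hK (fun j => (s8_norm_le_iff_dvd K (h j)).2 (hdvd j)) i
    rw [show (-(K + 1) : ℤ) = -(((K + 1 : ℕ)) : ℤ) by push_cast; ring] at hle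
    exact (s8_norm_le_iff_dvd (K + 1) _).1 hle
  -- F is well defined modulo p^K for K ≥ N
  have hcongr : ∀ (K : ℕ), N ≤ K → ∀ (x y : Fin n → ℤ_[p]),
      (∀ j, (p : ℤ_[p]) ^ K ∣ (y j - x j)) → ∀ i, (p : ℤ_[p]) ^ K ∣ (F y i - F x i) := by
    intro K hK x y hxy i
    have h1 := hd2 x (y - x) K hK (fun j => by simpa using hxy j) i
    have e : x + (y - x) = y := by ring
    rw [e] at h1
    have h2 : (p : ℤ_[p]) ^ K ∣ ∑ j, (y - x) j * J x j i :=
      Finset.dvd_sum fun j _ => dvd_mul_of_dvd_left (by simpa using hxy j) _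
    have h3 : (p : ℤ_[p]) ^ K ∣ F y i - (F x i + ∑ j, (y - x) j * J x j i) :=
      dvd_trans (pow_dvd_pow _ (Nat.le_succ K)) h1
    have h4 : F y i - F x i
        = (F y i - (F x i + ∑ j, (y - x) j * J x j i)) + ∑ j, (y - x) j * J x j i := by
      ring
    rw [h4]; exact dvd_add h3 h2
  -- canonical representative map
  -- compatibility of the canonical induced map
  have hwd : ∀ K, N ≤ K → ∀ x : Fin n → ℤ_[p], ∀ i,
      PadicInt.toZModPow K (F (fun j => (((PadicInt.toZModPow K (x j)).val : ℕ) : ℤ_[p])) i)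
        = PadicInt.toZModPow K (F x i) := by
    intro K hK x i
    apply (s8_red_eq_iff K _ _).2
    refine hcongr K hK _ _ (fun j => (s8_red_eq_iff K _ _).1 ?_) i
    rw [s8_red_lift]
  constructor
  · rintro ⟨K₀, hK₀⟩
    constructor
    · -- bijective mod p^N
      set k := max K₀ N with hk
      obtain ⟨gk, hgkc, hgkb⟩ := hK₀ k (le_max_left _ _)
      refine ⟨fun a i => PadicInt.toZModPow N (F (fun j => ((a j).val : ℤ_[p])) i), ?_, ?_⟩
      · intro x
        funext i
        exact hwd N le_rfl x i
      · haveI : NeZero (p ^ N) := ⟨pow_ne_zero N hppos⟩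
        rw [← Finite.surjective_iff_bijective]
        intro t
        obtain ⟨b, hb⟩ := hgkb.2 (fun i => PadicInt.toZModPow k ((t i).val : ℤ_[p]))
        set u : Fin n → ℤ_[p] := fun j => ((b j).val : ℤ_[p]) with hu
        have hred : (fun i => PadicInt.toZModPow k (u i)) = b := by
          funext i; exact s8_red_lift k (b i)
        have hFu : ∀ i, PadicInt.toZModPow k (F u i)
            = PadicInt.toZModPow k ((t i).val : ℤ_[p]) := by
          intro i
          have := hgkc u
          rw [hred, hb] at this
          exact (congrFun this i).symm
        refine ⟨fun i => PadicInt.toZModPow N (u i), ?_⟩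
        funext i
        have h1 : PadicInt.toZModPow N
            (F (fun j => (((PadicInt.toZModPow N (u j)).val : ℕ) : ℤ_[p])) i)
            = PadicInt.toZModPow N (F u i) := hwd N le_rfl u i
        have h2 : (p : ℤ_[p]) ^ N ∣ (F u i - ((t i).val : ℤ_[p])) :=
          dvd_trans (pow_dvd_pow _ (le_max_right K₀ N)) ((s8_red_eq_iff k _ _).1 (hFu i))
        have h3 : PadicInt.toZModPow N (F u i)
            = PadicInt.toZModPow N ((t i).val : ℤ_[p]) := (s8_red_eq_iff N _ _).2 h2
        beta_reduce
        rw [h1, h3, s8_red_lift]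
    · -- nonvanishing Jacobian mod p
      intro u hdet0
      set K := max K₀ N with hK
      obtain ⟨g, hgc, hgb⟩ := hK₀ (K + 1) (le_trans (le_max_left _ _) (Nat.le_succ K))
      -- kernel vector of the Jacobian mod p
      have hdetbar : ((J u).map (PadicInt.toZMod)).det = 0 := by
        have hmd := (RingHom.map_det (PadicInt.toZMod) (J u)).symm
        have : ((J u).map (PadicInt.toZMod)).det = PadicInt.toZMod (J u).det := hmd
        rw [this]
        exact (s8_toZMod_eq_zero_iff _).2 hdet0
      obtain ⟨v, hv0, hvM⟩ := Matrix.exists_vecMul_eq_zero_iff.2 hdetbar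
      set v' : Fin n → ℤ_[p] := fun j => ((v j).val : ℤ_[p]) with hv'
      set h : Fin n → ℤ_[p] := fun j => (p : ℤ_[p]) ^ K * v' j with hh
      have hdvS : ∀ i, (p : ℤ_[p]) ^ (K + 1) ∣ ∑ j, h j * J u j i := by
        intro i
        have hsum : ∑ j, h j * J u j i = (p : ℤ_[p]) ^ K * ∑ j, v' j * J u j i := by
          rw [Finset.mul_sum]
          exact Finset.sum_congr rfl fun j _ => by rw [hh]; ring
        have hmodp : (p : ℤ_[p]) ∣ ∑ j, v' j * J u j i := by
          apply (s8_toZMod_eq_zero_iff _).1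
          have : PadicInt.toZMod (∑ j, v' j * J u j i)
              = ∑ j, v j * ((J u).map PadicInt.toZMod) j i := by
            rw [map_sum]
            exact Finset.sum_congr rfl fun j _ => by
              rw [map_mul, s8_toZMod_lift]; rfl
          rw [this]
          have := congrFun hvM i
          simpa [Matrix.vecMul, dotProduct] using this
        rw [hsum, pow_succ]
        exact mul_dvd_mul dvd_rfl hmodp
      have hFeq : ∀ i, (p : ℤ_[p]) ^ (K + 1) ∣ (F (u + h) i - F u i) := by
        intro i
        have h1 := hd2 u h K (le_max_right _ _) (fun j => Dvd.intro _ rfl) i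
        have h4 : F (u + h) i - F u i
            = (F (u + h) i - (F u i + ∑ j, h j * J u j i)) + ∑ j, h j * J u j i := by ring
        rw [h4]; exact dvd_add h1 (hdvS i)
      -- injectivity mod p^{K+1} forces v = 0
      have hgeq : g (fun i => PadicInt.toZModPow (K + 1) ((u + h) i))
          = g (fun i => PadicInt.toZModPow (K + 1) (u i)) := by
        rw [hgc, hgc]
        funext i
        exact (s8_red_eq_iff (K + 1) _ _).2 (hFeq i)
      have hred := hgb.1 hgeq
      apply hv0
      funext j
      have h5 : (p : ℤ_[p]) ^ (K + 1) ∣ h j := by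
        have := congrFun hred j
        have h6 := (s8_red_eq_iff (K + 1) _ _).1 this
        simpa using h6
      have h7 : (p : ℤ_[p]) ∣ v' j := by
        rw [hh] at h5
        have : (p : ℤ_[p]) ^ K * (p : ℤ_[p]) ∣ (p : ℤ_[p]) ^ K * v' j := by
          rwa [← pow_succ]
        exact (mul_dvd_mul_iff_left (pow_ne_zero K hpne)).1 this
      have := (s8_toZMod_eq_zero_iff _).1 ((s8_toZMod_eq_zero_iff _).2 h7)
      rw [← s8_toZMod_lift (p := p) (v j)]
      rw [show PadicInt.toZMod (((v j).val : ℤ_[p])) = 0 from (s8_toZMod_eq_zero_iff _).2 h7]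
      rfl
  · rintro ⟨hN, hdet⟩
    -- lifting step: bijective mod p^K implies bijective mod p^{K+1}
    have hstep : ∀ K, N ≤ K → BijectiveModVec F K → BijectiveModVec F (K + 1) := by
      intro K hNK ⟨gK, hgKc, hgKb⟩
      refine ⟨fun a i => PadicInt.toZModPow (K + 1) (F (fun j => ((a j).val : ℤ_[p])) i),
        ?_, ?_⟩
      · intro x
        funext i
        exact hwd (K + 1) (le_trans hNK (Nat.le_succ K)) x i
      · haveI : NeZero (p ^ (K + 1)) := ⟨pow_ne_zero _ hppos⟩
        rw [← Finite.surjective_iff_bijective]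
        intro t
        set t' : Fin n → ℤ_[p] := fun i => ((t i).val : ℤ_[p]) with ht'
        obtain ⟨b, hb⟩ := hgKb.2 (fun i => PadicInt.toZModPow K (t' i))
        set u : Fin n → ℤ_[p] := fun j => ((b j).val : ℤ_[p]) with hu
        have hred : (fun i => PadicInt.toZModPow K (u i)) = b := by
          funext i; exact s8_red_lift K (b i)
        have hFu : ∀ i, (p : ℤ_[p]) ^ K ∣ (t' i - F u i) := by
          intro i
          apply (s8_red_eq_iff K _ _).1
          have := hgKc u
          rw [hred, hb] at this
          exact congrFun this i
        choose w hw using hFu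
        -- invert the Jacobian
        have hMu : IsUnit (J u).det := by
          rw [PadicInt.isUnit_iff]
          refine le_antisymm (PadicInt.norm_le_one _) (not_lt.1 fun hlt => ?_)
          exact hdet u ((PadicInt.norm_lt_one_iff_dvd _).1 hlt)
        set M := J u with hM
        set e : Fin n → ℤ_[p] := Matrix.vecMul w M⁻¹ with he
        have hvm : Matrix.vecMul e M = w := by
          rw [he, Matrix.vecMul_vecMul, Matrix.nonsing_inv_mul M hMu, Matrix.vecMul_one]
        set hstep' : Fin n → ℤ_[p] := fun j => (p : ℤ_[p]) ^ K * e j with hhs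
        have hS : ∀ i, ∑ j, hstep' j * M j i = (p : ℤ_[p]) ^ K * w i := by
          intro i
          have h1 : ∑ j, hstep' j * M j i = (p : ℤ_[p]) ^ K * ∑ j, e j * M j i := by
            rw [Finset.mul_sum]
            exact Finset.sum_congr rfl fun j _ => by rw [hhs]; ring
          have h2 : ∑ j, e j * M j i = Matrix.vecMul e M i := by
            simp [Matrix.vecMul, dotProduct]
          rw [h1, h2, hvm]
        have hkey : ∀ i, (p : ℤ_[p]) ^ (K + 1) ∣ (F (u + hstep') i - t' i) := by
          intro i
          have h1 := hd2 u hstep' K hNK (fun j => Dvd.intro _ rfl) i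
          have h2 : F u i + ∑ j, hstep' j * J u j i = t' i := by
            rw [← hM, hS i, ← hw i]; ring
          rwa [h2] at h1
        refine ⟨fun i => PadicInt.toZModPow (K + 1) ((u + hstep') i), ?_⟩
        funext i
        have h3 := hwd (K + 1) (le_trans hNK (Nat.le_succ K)) (u + hstep') i
        beta_reduce
        rw [h3]
        have h4 : PadicInt.toZModPow (K + 1) (F (u + hstep') i)
            = PadicInt.toZModPow (K + 1) (t' i) := (s8_red_eq_iff _ _ _).2 (hkey i)
        rw [h4, ht']
        exact s8_red_lift (K + 1) (t i)
    exact ⟨N, fun k hk => Nat.le_induction hN (fun K hK ih => hstep K hK ih) k hk⟩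
end

section
/- Let F = (f_1, ..., f_n) : ℤ_p^n → ℤ_p^n where each f_i is a polynomial with p-adic integer coefficients. Then F preserves the Haar measure on ℤ_p^n (equivalently, is bijective modulo p^k for all k) if and only if F is bijective modulo p and the Jacobian determinant det F'(u) is nonzero modulo p for all u ∈ {0,1,...,p-1}^n; equivalently, if and only if F is bijective modulo p^2. -/
open MvPolynomial

namespace Stmt9Aux
variable {p : ℕ} [Fact p.Prime] {n : ℕ}

/-- reduction of the polynomial map modulo `p^k` -/
noncomputable def Fbar (P : Fin n → MvPolynomial (Fin n) ℤ_[p]) (k : ℕ) :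
    (Fin n → ZMod (p ^ k)) → (Fin n → ZMod (p ^ k)) :=
  fun a i => eval a ((P i).map (PadicInt.toZModPow k))

lemma red (k : ℕ) (f : MvPolynomial (Fin n) ℤ_[p]) (x : Fin n → ℤ_[p]) :
    PadicInt.toZModPow k (eval x f)
      = eval (fun j => PadicInt.toZModPow k (x j)) (f.map (PadicInt.toZModPow k)) := by
  rw [eval_map]
  exact (map_eval₂Hom (RingHom.id _) x (PadicInt.toZModPow k) f).trans rfl

lemma psi_surj (k : ℕ) :
    Function.Surjective (fun x : Fin n → ℤ_[p] => fun i => PadicInt.toZModPow k (x i)) := by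
  intro a
  choose m hm using fun i => ZMod.intCast_surjective (n := p ^ k) (a i)
  exact ⟨fun i => ((m i : ℤ) : ℤ_[p]), funext fun i => by simp [hm i]⟩

lemma intertwine (P : Fin n → MvPolynomial (Fin n) ℤ_[p]) (k : ℕ) (x : Fin n → ℤ_[p]) :
    Fbar P k (fun i => PadicInt.toZModPow k (x i))
      = fun i => PadicInt.toZModPow k (eval x (P i)) :=
  funext fun i => (red k (P i) x).symm

lemma bij_iff (P : Fin n → MvPolynomial (Fin n) ℤ_[p]) (k : ℕ) :
    BijectiveModVec (fun x i => eval x (P i)) k ↔ Function.Bijective (Fbar P k) := by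
  constructor
  · rintro ⟨g, hg, hbij⟩
    have : g = Fbar P k := by
      funext a
      obtain ⟨x, rfl⟩ := psi_surj (p := p) k a
      rw [hg x, intertwine]
    rwa [this] at hbij
  · intro h
    exact ⟨Fbar P k, fun x => intertwine P k x, h⟩

lemma dvd_iff (k : ℕ) (a b : ℤ_[p]) :
    PadicInt.toZModPow k a = PadicInt.toZModPow k b ↔ (p : ℤ_[p]) ^ k ∣ a - b := by
  rw [← sub_eq_zero, ← map_sub, ← RingHom.mem_ker, PadicInt.ker_toZModPow,
    Ideal.mem_span_singleton]

/-- surjectivity modulo `p^k`, stated with divisibility in `ℤ_[p]` -/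
def S (P : Fin n → MvPolynomial (Fin n) ℤ_[p]) (k : ℕ) : Prop :=
  ∀ y : Fin n → ℤ_[p], ∃ x, ∀ i, (p : ℤ_[p]) ^ k ∣ eval x (P i) - y i

lemma surj_iff (P : Fin n → MvPolynomial (Fin n) ℤ_[p]) (k : ℕ) :
    Function.Surjective (Fbar P k) ↔ S P k := by
  constructor
  · intro h y
    obtain ⟨b, hb⟩ := h (fun i => PadicInt.toZModPow k (y i))
    obtain ⟨x, rfl⟩ := psi_surj (p := p) k b
    rw [intertwine] at hb
    exact ⟨x, fun i => (dvd_iff k _ _).mp (congrFun hb i)⟩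
  · intro h a
    obtain ⟨y, rfl⟩ := psi_surj (p := p) k a
    obtain ⟨x, hx⟩ := h y
    refine ⟨fun i => PadicInt.toZModPow k (x i), ?_⟩
    rw [intertwine]
    exact funext fun i => (dvd_iff k _ _).mpr (hx i)

lemma bij_of_surj (P : Fin n → MvPolynomial (Fin n) ℤ_[p]) (k : ℕ)
    (h : Function.Surjective (Fbar P k)) : Function.Bijective (Fbar P k) := by
  haveI : NeZero (p ^ k) := ⟨pow_ne_zero k (Fact.out : p.Prime).ne_zero⟩
  exact ⟨Finite.injective_iff_surjective.mpr h, h⟩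


lemma taylor (f : MvPolynomial (Fin n) ℤ_[p]) (x w : Fin n → ℤ_[p]) (c : ℤ_[p]) :
    ∃ r, eval (fun i => x i + c * w i) f
      = eval x f + c * (∑ j, w j * eval x (pderiv j f)) + c ^ 2 * r := by
  induction f using MvPolynomial.induction_on with
  | C a => exact ⟨0, by simp⟩
  | add f g hf hg =>
    obtain ⟨r, hr⟩ := hf; obtain ⟨s, hs⟩ := hg
    refine ⟨r + s, ?_⟩
    simp only [map_add, hr, hs, mul_add, Finset.sum_add_distrib]
    ring
  | mul_X f i hf =>
    obtain ⟨r, hr⟩ := hf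
    have key : ∑ j, w j * eval x (pderiv j (f * X i))
        = (∑ j, w j * eval x (pderiv j f)) * x i + w i * eval x f := by
      have h1 : ∀ j, w j * eval x (pderiv j (f * X i))
          = w j * eval x (pderiv j f) * x i + (if i = j then w j * eval x f else 0) := by
        intro j
        rw [pderiv_mul, pderiv_X, map_add, map_mul, map_mul, eval_X, Pi.single_apply]
        split_ifs with h <;> simp <;> ring
      simp only [h1, Finset.sum_add_distrib, Finset.sum_ite_eq, Finset.mem_univ, if_true,
        ← Finset.sum_mul]
    refine ⟨(∑ j, w j * eval x (pderiv j f)) * w i + r * x i + c * (r * w i), ?_⟩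
    simp only [map_mul, eval_X, hr, key]
    ring

lemma dvd_iff_toZMod (a : ℤ_[p]) : (p : ℤ_[p]) ∣ a ↔ PadicInt.toZMod a = 0 := by
  rw [← RingHom.mem_ker, PadicInt.ker_toZMod, PadicInt.maximalIdeal_eq_span_p,
    Ideal.mem_span_singleton]

lemma toZMod_sum_eval (x w : Fin n → ℤ_[p])
    (P : Fin n → MvPolynomial (Fin n) ℤ_[p]) (i : Fin n) :
    PadicInt.toZMod (∑ j, w j * eval x (pderiv j (P i)))
      = ∑ j, PadicInt.toZMod (w j) *
          ((Matrix.of fun i j => eval x (pderiv j (P i))).map PadicInt.toZMod) i j := by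
  rw [map_sum]
  exact Finset.sum_congr rfl fun j _ => by simp [Matrix.map_apply]

lemma lift_vec (v : Fin n → ZMod p) : ∃ w : Fin n → ℤ_[p], ∀ i, PadicInt.toZMod (w i) = v i := by
  choose m hm using fun i => ZMod.intCast_surjective (n := p) (v i)
  exact ⟨fun i => ((m i : ℤ) : ℤ_[p]), fun i => by simp [hm i]⟩

lemma jac (P : Fin n → MvPolynomial (Fin n) ℤ_[p])
    (h2 : Function.Bijective (Fbar P 2)) (u : Fin n → ℤ_[p]) :
    ¬ (p : ℤ_[p]) ∣ (Matrix.of fun i j => eval u (pderiv j (P i))).det := by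
  intro hdvd
  set M : Matrix (Fin n) (Fin n) ℤ_[p] := Matrix.of fun i j => eval u (pderiv j (P i)) with hM
  have hdet : (M.map PadicInt.toZMod).det = 0 := by
    have h := RingHom.map_det (PadicInt.toZMod (p := p)) M
    rw [RingHom.mapMatrix_apply] at h
    rw [← h]
    exact (dvd_iff_toZMod _).mp hdvd
  obtain ⟨v, hv0, hvM⟩ := (Matrix.exists_mulVec_eq_zero_iff).mpr hdet
  obtain ⟨w, hw⟩ := lift_vec v
  set u' : Fin n → ℤ_[p] := fun i => u i + (p : ℤ_[p]) * w i with hu'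
  have hcong : ∀ i, (p : ℤ_[p]) ^ 2 ∣ eval u' (P i) - eval u (P i) := by
    intro i
    obtain ⟨r, hr⟩ := taylor (P i) u w (p : ℤ_[p])
    have hSg : (p : ℤ_[p]) ∣ ∑ j, w j * eval u (pderiv j (P i)) := by
      rw [dvd_iff_toZMod, toZMod_sum_eval]
      have h0 := congrFun hvM i
      rw [Matrix.mulVec, dotProduct, Pi.zero_apply] at h0
      rw [← h0]
      exact Finset.sum_congr rfl fun j _ => by rw [hw j, mul_comm]
    obtain ⟨t, ht⟩ := hSg
    refine ⟨t + r, ?_⟩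
    rw [hr, ht]; ring
  have heq : (fun i => PadicInt.toZModPow 2 (u' i)) = fun i => PadicInt.toZModPow 2 (u i) := by
    apply h2.1
    rw [intertwine, intertwine]
    exact funext fun i => (dvd_iff 2 _ _).mpr (hcong i)
  have hpne : (p : ℤ_[p]) ≠ 0 := Nat.cast_ne_zero.mpr (Fact.out : p.Prime).ne_zero
  apply hv0
  funext i
  have h1 : (p : ℤ_[p]) ^ 2 ∣ u' i - u i := (dvd_iff 2 _ _).mp (congrFun heq i)
  have h2' : (p : ℤ_[p]) ∣ w i := by
    have : (p : ℤ_[p]) * (p : ℤ_[p]) ∣ (p : ℤ_[p]) * w i := by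
      rw [← sq]; simpa [hu'] using h1
    exact (mul_dvd_mul_iff_left hpne).mp this
  rw [← hw i]
  simpa using (dvd_iff_toZMod _).mp h2'


lemma lift_step (P : Fin n → MvPolynomial (Fin n) ℤ_[p])
    (hJ : ∀ u : Fin n → ℤ_[p],
      ¬ (p : ℤ_[p]) ∣ (Matrix.of fun i j => eval u (pderiv j (P i))).det)
    (k : ℕ) (hk : 1 ≤ k) (hS : S P k) : S P (k + 1) := by
  intro y
  obtain ⟨x₀, hx₀⟩ := hS y
  choose r hr using hx₀
  set M : Matrix (Fin n) (Fin n) ℤ_[p] := Matrix.of fun i j => eval x₀ (pderiv j (P i)) with hM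
  set Mb : Matrix (Fin n) (Fin n) (ZMod p) := M.map PadicInt.toZMod with hMb
  have hdet : Mb.det ≠ 0 := by
    intro h0
    apply hJ x₀
    rw [dvd_iff_toZMod]
    have h := RingHom.map_det (PadicInt.toZMod (p := p)) M
    rw [RingHom.mapMatrix_apply] at h
    rw [h, ← hMb, h0]
  have hunit : IsUnit Mb.det := isUnit_iff_ne_zero.mpr hdet
  set v : Fin n → ZMod p := Mb⁻¹.mulVec (fun i => - PadicInt.toZMod (r i)) with hv
  have hMv : Mb.mulVec v = fun i => - PadicInt.toZMod (r i) := by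
    rw [hv, Matrix.mulVec_mulVec, Matrix.mul_nonsing_inv _ hunit, Matrix.one_mulVec]
  obtain ⟨w, hw⟩ := lift_vec v
  refine ⟨fun i => x₀ i + (p : ℤ_[p]) ^ k * w i, fun i => ?_⟩
  obtain ⟨s, hs⟩ := taylor (P i) x₀ w ((p : ℤ_[p]) ^ k)
  have hSd : (p : ℤ_[p]) ∣ r i + ∑ j, w j * eval x₀ (pderiv j (P i)) := by
    rw [dvd_iff_toZMod, map_add, toZMod_sum_eval]
    have h0 := congrFun hMv i
    rw [Matrix.mulVec, dotProduct] at h0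
    have : ∑ j, PadicInt.toZMod (w j) * (M.map PadicInt.toZMod) i j
        = ∑ j, Mb i j * v j := Finset.sum_congr rfl fun j _ => by rw [hw j, mul_comm, hMb]
    rw [← hM, this, h0]
    ring
  obtain ⟨t, ht⟩ := hSd
  have h2k : (p : ℤ_[p]) ^ (k + 1) ∣ ((p : ℤ_[p]) ^ k) ^ 2 * s := by
    refine Dvd.dvd.mul_right ?_ s
    rw [← pow_mul]
    exact pow_dvd_pow _ (by omega)
  obtain ⟨q, hq⟩ := h2k
  refine ⟨t + q, ?_⟩
  have : eval (fun j => x₀ j + (p : ℤ_[p]) ^ k * w j) (P i) - y i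
      = (eval x₀ (P i) - y i) + (p : ℤ_[p]) ^ k * (∑ j, w j * eval x₀ (pderiv j (P i)))
        + ((p : ℤ_[p]) ^ k) ^ 2 * s := by
    rw [hs]; ring
  rw [this, hr i, hq]
  have hpt : (p : ℤ_[p]) ^ k * r i + (p : ℤ_[p]) ^ k * (∑ j, w j * eval x₀ (pderiv j (P i)))
      = (p : ℤ_[p]) ^ (k + 1) * t := by
    rw [← mul_add, ht, pow_succ]
    ring
  calc (p : ℤ_[p]) ^ k * r i + (p : ℤ_[p]) ^ k * (∑ j, w j * eval x₀ (pderiv j (P i)))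
        + (p : ℤ_[p]) ^ (k + 1) * q
      = (p : ℤ_[p]) ^ (k + 1) * t + (p : ℤ_[p]) ^ (k + 1) * q := by rw [hpt]
    _ = (p : ℤ_[p]) ^ (k + 1) * (t + q) := by ring

lemma main_lift (P : Fin n → MvPolynomial (Fin n) ℤ_[p])
    (h1 : Function.Bijective (Fbar P 1))
    (hJ : ∀ u : Fin n → ℤ_[p],
      ¬ (p : ℤ_[p]) ∣ (Matrix.of fun i j => eval u (pderiv j (P i))).det) :
    ∀ k, 1 ≤ k → Function.Bijective (Fbar P k) := by
  have hS : ∀ k, 1 ≤ k → S P k := by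
    intro k hk
    induction k, hk using Nat.le_induction with
    | base => exact (surj_iff P 1).mp h1.2
    | succ k hk ih => exact lift_step P hJ k hk ih
  exact fun k hk => bij_of_surj P k ((surj_iff P k).mpr (hS k hk))

end Stmt9Aux

theorem stmt9 {p : ℕ} [Fact p.Prime] {n : ℕ} (P : Fin n → MvPolynomial (Fin n) ℤ_[p]) :
    letI F : (Fin n → ℤ_[p]) → (Fin n → ℤ_[p]) := fun x i => MvPolynomial.eval x (P i)
    ((∀ k : ℕ, 1 ≤ k → BijectiveModVec F k) ↔
      (BijectiveModVec F 1 ∧ ∀ u : Fin n → ℤ_[p],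
        ¬ (p : ℤ_[p]) ∣
          (Matrix.of fun i j => MvPolynomial.eval u (MvPolynomial.pderiv j (P i))).det)) ∧
    ((∀ k : ℕ, 1 ≤ k → BijectiveModVec F k) ↔ BijectiveModVec F 2) := by
  set F : (Fin n → ℤ_[p]) → (Fin n → ℤ_[p]) := fun x i => MvPolynomial.eval x (P i) with hF
  have hbij := Stmt9Aux.bij_iff P
  have hback : (BijectiveModVec F 1 ∧ ∀ u : Fin n → ℤ_[p],
      ¬ (p : ℤ_[p]) ∣
        (Matrix.of fun i j => MvPolynomial.eval u (MvPolynomial.pderiv j (P i))).det) →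
      ∀ k, 1 ≤ k → BijectiveModVec F k := by
    rintro ⟨h1, hJ⟩ k hk
    exact (hbij k).mpr (Stmt9Aux.main_lift P ((hbij 1).mp h1) hJ k hk)
  have hA2A1 : BijectiveModVec F 2 → BijectiveModVec F 1 := by
    intro h2
    have hS2 := (Stmt9Aux.surj_iff P 2).mp ((hbij 2).mp h2).2
    have hS1 : Stmt9Aux.S P 1 := by
      intro y
      obtain ⟨x, hx⟩ := hS2 y
      exact ⟨x, fun i => dvd_trans (pow_dvd_pow _ one_le_two) (hx i)⟩
    exact (hbij 1).mpr (Stmt9Aux.bij_of_surj P 1 ((Stmt9Aux.surj_iff P 1).mpr hS1))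
  constructor
  · constructor
    · intro h
      exact ⟨h 1 le_rfl, Stmt9Aux.jac P ((hbij 2).mp (h 2 (by norm_num)))⟩
    · exact hback
  · constructor
    · intro h
      exact h 2 (by norm_num)
    · intro h2
      exact hback ⟨hA2A1 h2, Stmt9Aux.jac P ((hbij 2).mp h2)⟩
end

section
/- Let f : ℤ_p → ℤ_p be compatible and uniformly differentiable modulo p with integer-valued derivative modulo p. If f is transitive modulo p^k for some k > N_1(f), then f induces on ℤ/p^{k+1} ℤ a permutation that is either a single cycle of length p^{k+1}, or a product of p pairwise disjoint cycles each of length p^k. -/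
namespace Stmt12Aux

open PadicInt Function Finset

/-- `p^{-n}` as a real number. -/
noncomputable def mu (p : ℕ) (n : ℕ) : ℝ := (p : ℝ) ^ (-(n : ℤ))

/-- product of derivative values along the orbit -/
noncomputable def Pr {p : ℕ} [Fact p.Prime] (f f' : ℤ_[p] → ℤ_[p]) (u : ℤ_[p]) (m : ℕ) : ℤ_[p] :=
  ∏ i ∈ Finset.range m, f' (f^[i] u)

/-- the induced map on `ZMod (p^n)` -/
noncomputable def gmap {p : ℕ} [Fact p.Prime] (f : ℤ_[p] → ℤ_[p]) (n : ℕ) :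
    ZMod (p^n) → ZMod (p^n) :=
  fun a => PadicInt.toZModPow n (f ((a.val : ℤ_[p])))

variable {p : ℕ} [hp : Fact p.Prime]

lemma mu_pos (n : ℕ) : 0 < mu p n := by
  have : (0:ℝ) < p := by exact_mod_cast hp.out.pos
  exact zpow_pos this _

lemma mu_add (a b : ℕ) : mu p (a + b) = mu p a * mu p b := by
  unfold mu
  rw [← zpow_add₀ (by exact_mod_cast hp.out.ne_zero : ((p:ℕ):ℝ) ≠ 0)]
  congr 1
  push_cast
  ring

lemma mu_antitone {a b : ℕ} (h : a ≤ b) : mu p b ≤ mu p a := by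
  unfold mu
  apply zpow_le_zpow_right₀ (by exact_mod_cast hp.out.one_lt.le)
  omega

lemma norm_p_pow_mu (n : ℕ) : ‖((p:ℤ_[p]))^n‖ = mu p n := PadicInt.norm_p_pow n

/-- nonarchimedean helper -/
lemma nadd {a b : ℤ_[p]} {ε : ℝ} (ha : ‖a‖ ≤ ε) (hb : ‖b‖ ≤ ε) : ‖a + b‖ ≤ ε :=
  le_trans (PadicInt.nonarchimedean a b) (max_le ha hb)

lemma nsub {a b : ℤ_[p]} {ε : ℝ} (ha : ‖a‖ ≤ ε) (hb : ‖b‖ ≤ ε) : ‖a - b‖ ≤ ε := by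
  rw [sub_eq_add_neg]
  exact nadd ha (by rwa [norm_neg])

lemma ctrans {a b c : ℤ_[p]} {ε : ℝ} (h1 : ‖a - b‖ ≤ ε) (h2 : ‖b - c‖ ≤ ε) :
    ‖a - c‖ ≤ ε := by
  have : a - c = (a - b) + (b - c) := by ring
  rw [this]; exact nadd h1 h2

lemma csymm {a b : ℤ_[p]} {ε : ℝ} (h : ‖a - b‖ ≤ ε) : ‖b - a‖ ≤ ε := by
  rwa [norm_sub_rev]

/-- multiply congruences (all elements have norm ≤ 1) -/
lemma cmul {a b c d : ℤ_[p]} {ε : ℝ} (h1 : ‖a - c‖ ≤ ε) (h2 : ‖b - d‖ ≤ ε) :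
    ‖a * b - c * d‖ ≤ ε := by
  have : a * b - c * d = a * (b - d) + (a - c) * d := by ring
  rw [this]
  apply nadd
  · rw [norm_mul]
    calc ‖a‖ * ‖b - d‖ ≤ 1 * ε :=
          mul_le_mul (PadicInt.norm_le_one a) h2 (norm_nonneg _) zero_le_one
    _ = ε := one_mul ε
  · rw [norm_mul]
    calc ‖a - c‖ * ‖d‖ ≤ ε * 1 := by
          have hd := PadicInt.norm_le_one d
          have h0 : (0:ℝ) ≤ ‖a - c‖ := norm_nonneg _
          nlinarith [norm_nonneg (b - d)]
    _ = ε := mul_one ε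

lemma cong_iff (n : ℕ) (x y : ℤ_[p]) :
    PadicInt.toZModPow n x = PadicInt.toZModPow n y ↔ ‖x - y‖ ≤ mu p n := by
  rw [show mu p n = (p:ℝ)^(-(n:ℤ)) from rfl, PadicInt.norm_le_pow_iff_mem_span_pow,
    ← PadicInt.ker_toZModPow, RingHom.mem_ker, map_sub, sub_eq_zero]

lemma lift_val (n : ℕ) [NeZero (p^n)] (a : ZMod (p^n)) :
    PadicInt.toZModPow n ((a.val : ℤ_[p])) = a := by
  rw [map_natCast]
  exact ZMod.natCast_rightInverse a

lemma trans_minimalPeriod {α : Type*} [Fintype α] (g : α → α)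
    (htr : ∀ a b : α, ∃ m : ℕ, g^[m] a = b) (a : α) :
    Function.minimalPeriod g a = Fintype.card α := by
  classical
  have hper : a ∈ Function.periodicPts g := by
    obtain ⟨m, hm⟩ := htr (g a) a
    refine ⟨m+1, m.succ_pos, ?_⟩
    show g^[m+1] a = a
    rwa [Function.iterate_succ_apply]
  set t := Function.minimalPeriod g a with ht
  have htpos : 0 < t := Function.minimalPeriod_pos_of_mem_periodicPts hper
  have hta : g^[t] a = a := Function.iterate_minimalPeriod
  have key : ∀ i j, i < t → j < t → g^[i] a = g^[j] a → i = j := by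
    intro i j hi hj hij
    by_contra hne
    wlog hlt : i < j generalizing i j
    · exact this j i hj hi hij.symm (Ne.symm hne) (by omega)
    have h1 : g^[t - j + i] a = a := by
      have h2 : g^[t - j] (g^[j] a) = a := by
        rw [← Function.iterate_add_apply, Nat.sub_add_cancel hj.le]
        exact hta
      rw [← hij, ← Function.iterate_add_apply] at h2
      exact h2
    have h3 : Function.IsPeriodicPt g (t - j + i) a := h1
    have := h3.minimalPeriod_le (by omega)
    omega
  have hsurj : ∀ b, ∃ i, i < t ∧ g^[i] a = b := by
    intro b
    obtain ⟨m, hm⟩ := htr a b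
    exact ⟨m % t, Nat.mod_lt _ htpos,
      by rw [Function.iterate_mod_minimalPeriod_eq]; exact hm⟩
  have huniv : (Finset.univ : Finset α) = (Finset.range t).image (fun i => g^[i] a) := by
    ext b
    simp only [Finset.mem_univ, true_iff, Finset.mem_image, Finset.mem_range]
    obtain ⟨i, h1, h2⟩ := hsurj b
    exact ⟨i, h1, h2⟩
  have hcard : Fintype.card α = t := by
    rw [← Finset.card_univ, huniv, Finset.card_image_of_injOn, Finset.card_range]
    intro i hi j hj
    exact key i j (Finset.mem_range.mp hi) (Finset.mem_range.mp hj)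
  omega

variable {f : ℤ_[p] → ℤ_[p]}

lemma iter_compat (hcomp : IsCompatible f) (m : ℕ) (x y : ℤ_[p]) :
    ‖f^[m] x - f^[m] y‖ ≤ ‖x - y‖ := by
  induction m with
  | zero => simp
  | succ m ih =>
    rw [Function.iterate_succ_apply', Function.iterate_succ_apply']
    exact (hcomp _ _).trans ih

/-- the induced map on `ZMod (p^n)` -/

lemma gmap_spec (hcomp : IsCompatible f) (n : ℕ) (x : ℤ_[p]) :
    gmap f n (PadicInt.toZModPow n x) = PadicInt.toZModPow n (f x) := by
  haveI : NeZero (p^n) := ⟨pow_ne_zero n hp.out.ne_zero⟩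
  have h1 : PadicInt.toZModPow n (((PadicInt.toZModPow n x).val : ℤ_[p]))
      = PadicInt.toZModPow n x := lift_val n _
  show PadicInt.toZModPow n (f _) = _
  rw [cong_iff]
  exact le_trans (hcomp _ _) ((cong_iff n _ _).mp h1)

lemma gmap_iter (hcomp : IsCompatible f) (n m : ℕ) (x : ℤ_[p]) :
    (gmap f n)^[m] (PadicInt.toZModPow n x) = PadicInt.toZModPow n (f^[m] x) := by
  induction m with
  | zero => rfl
  | succ m ih =>
    rw [Function.iterate_succ_apply', Function.iterate_succ_apply', ih, gmap_spec hcomp]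

lemma bridge (hcomp : IsCompatible f) (n : ℕ)
    (htr : ∀ x y : ℤ_[p], ∃ m : ℕ, ‖f^[m] x - y‖ ≤ mu p n) :
    (∀ x : ℤ_[p], ‖f^[p^n] x - x‖ ≤ mu p n) ∧
    (∀ (x : ℤ_[p]) (m : ℕ), ‖f^[m] x - x‖ ≤ mu p n → p^n ∣ m) := by
  haveI : NeZero (p^n) := ⟨pow_ne_zero n hp.out.ne_zero⟩
  have htr' : ∀ a b : ZMod (p^n), ∃ m : ℕ, (gmap f n)^[m] a = b := by
    intro a b
    obtain ⟨m, hm⟩ := htr ((a.val : ℤ_[p])) ((b.val : ℤ_[p]))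
    refine ⟨m, ?_⟩
    conv_lhs => rw [← lift_val n a]
    rw [gmap_iter hcomp]
    conv_rhs => rw [← lift_val n b]
    exact (cong_iff n _ _).mpr hm
  have hmp : ∀ a : ZMod (p^n), Function.minimalPeriod (gmap f n) a = p^n := by
    intro a
    rw [trans_minimalPeriod _ htr' a, ZMod.card]
  constructor
  · intro x
    rw [← cong_iff, ← gmap_iter hcomp]
    have := Function.iterate_minimalPeriod (f := gmap f n) (x := PadicInt.toZModPow n x)
    rwa [hmp] at this
  · intro x m hm
    have hpp : Function.IsPeriodicPt (gmap f n) m (PadicInt.toZModPow n x) := by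
      show (gmap f n)^[m] _ = _
      rw [gmap_iter hcomp]
      exact (cong_iff n _ _).mpr hm
    have := hpp.minimalPeriod_dvd
    rwa [hmp] at this

/-- the mu-version of the differentiability hypothesis -/
lemma hdiff_mu {f f' : ℤ_[p] → ℤ_[p]} {N : ℕ} (hdiff : UnifDiffMod1 f f' N)
    (u h : ℤ_[p]) (K : ℕ) (hK : N ≤ K) (hh : ‖h‖ ≤ mu p K) :
    ‖f (u + h) - (f u + h * f' u)‖ ≤ mu p (K + 1) := by
  have h2 : (mu p (K+1) : ℝ) = (p:ℝ)^(-(K+1) : ℤ) := by unfold mu; norm_cast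
  rw [h2]
  exact hdiff u h K hK hh

/-- scaling by p^a -/
lemma pmul_norm (a : ℕ) (x : ℤ_[p]) : ‖(p:ℤ_[p])^a * x‖ = mu p a * ‖x‖ := by
  rw [norm_mul, norm_p_pow_mu]

lemma pmul_le {a : ℕ} {x : ℤ_[p]} {ε : ℝ} (h : ‖x‖ ≤ ε) :
    ‖(p:ℤ_[p])^a * x‖ ≤ mu p a * ε := by
  rw [pmul_norm]
  exact mul_le_mul_of_nonneg_left h (le_of_lt (mu_pos a))

lemma pmul_cancel {a : ℕ} {x : ℤ_[p]} {ε : ℝ} (h : ‖(p:ℤ_[p])^a * x‖ ≤ mu p a * ε) :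
    ‖x‖ ≤ ε := by
  rw [pmul_norm] at h
  exact le_of_mul_le_mul_left h (mu_pos a)

lemma pmul_le_one {a : ℕ} (x : ℤ_[p]) : ‖(p:ℤ_[p])^a * x‖ ≤ mu p a := by
  have := pmul_le (a := a) (PadicInt.norm_le_one x)
  simpa using this

/-- norm ≤ 1 values: if not ≤ p⁻¹ then = 1 -/
lemma norm_dichotomy (x : ℤ_[p]) : ‖x‖ ≤ mu p 1 ∨ ‖x‖ = 1 := by
  by_cases h : ‖x‖ < 1
  · left
    have h2 : (mu p 1 : ℝ) = (p:ℝ)^(-1 : ℤ) := by unfold mu; norm_cast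
    rw [h2]
    exact (PadicInt.norm_le_pow_iff_norm_lt_pow_add_one x (-1)).mpr (by simpa using h)
  · right
    exact le_antisymm (PadicInt.norm_le_one x) (not_lt.mp h)


section Main

variable {f f' : ℤ_[p] → ℤ_[p]} {N : ℕ}

lemma Pr_norm_le_one (u : ℤ_[p]) (m : ℕ) : ‖Pr f f' u m‖ ≤ 1 := PadicInt.norm_le_one _

lemma Pr_succ (u : ℤ_[p]) (m : ℕ) : Pr f f' u (m+1) = Pr f f' u m * f' (f^[m] u) :=
  Finset.prod_range_succ _ _

lemma Pr_split (u : ℤ_[p]) (a b : ℕ) :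
    Pr f f' u (a + b) = Pr f f' u a * Pr f f' (f^[a] u) b := by
  unfold Pr
  rw [Finset.prod_range_add]
  congr 1
  apply Finset.prod_congr rfl
  intro i _
  congr 1
  rw [Nat.add_comm a i, Function.iterate_add_apply]

/-- Taylor expansion of iterates -/
lemma exp_lemma (hcomp : IsCompatible f) (hdiff : UnifDiffMod1 f f' N)
    {K : ℕ} (hK : N ≤ K) (u t : ℤ_[p]) (m : ℕ) :
    ‖f^[m] (u + (p:ℤ_[p])^K * t) - (f^[m] u + (p:ℤ_[p])^K * (t * Pr f f' u m))‖
      ≤ mu p (K + 1) := by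
  induction m with
  | zero =>
    show ‖(u + _) - (u + _ * (t * Pr f f' u 0))‖ ≤ _
    have : Pr f f' u 0 = 1 := Finset.prod_range_zero _
    rw [this, mul_one, sub_self, norm_zero]
    exact le_of_lt (mu_pos _)
  | succ m ih =>
    have h1 : ‖f^[m+1] (u + (p:ℤ_[p])^K * t)
        - f (f^[m] u + (p:ℤ_[p])^K * (t * Pr f f' u m))‖ ≤ mu p (K + 1) := by
      rw [Function.iterate_succ_apply']
      exact le_trans (hcomp _ _) ih
    have h2 : ‖f (f^[m] u + (p:ℤ_[p])^K * (t * Pr f f' u m))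
        - (f (f^[m] u) + (p:ℤ_[p])^K * (t * Pr f f' u m) * f' (f^[m] u))‖
          ≤ mu p (K + 1) :=
      hdiff_mu hdiff _ _ K hK (pmul_le_one _)
    have h3 : f (f^[m] u) + (p:ℤ_[p])^K * (t * Pr f f' u m) * f' (f^[m] u)
        = f^[m+1] u + (p:ℤ_[p])^K * (t * Pr f f' u (m+1)) := by
      rw [Pr_succ, Function.iterate_succ_apply']
      ring
    rw [h3] at h2
    exact ctrans h1 h2

/-- the derivative is locally constant mod p -/
lemma dwd (hdiff : UnifDiffMod1 f f' N) {u v : ℤ_[p]} (h : ‖u - v‖ ≤ mu p N) :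
    ‖f' u - f' v‖ ≤ mu p 1 := by
  have hvu : ‖v - u‖ ≤ mu p N := csymm h
  have hpN : ‖((p:ℤ_[p]))^N‖ ≤ mu p N := le_of_eq (norm_p_pow_mu N)
  have e1 := hdiff_mu hdiff u (v - u + (p:ℤ_[p])^N) N le_rfl (nadd hvu hpN)
  have e2 := hdiff_mu hdiff u (v - u) N le_rfl hvu
  have e3 := hdiff_mu hdiff v ((p:ℤ_[p])^N) N le_rfl hpN
  have hv : u + (v - u) = v := by ring
  have hv2 : u + (v - u + (p:ℤ_[p])^N) = v + (p:ℤ_[p])^N := by ring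
  rw [hv2] at e1
  rw [hv] at e2
  have key : (p:ℤ_[p])^N * (f' v - f' u) =
      (f (v + (p:ℤ_[p])^N) - (f u + (v - u + (p:ℤ_[p])^N) * f' u))
      - (f v - (f u + (v - u) * f' u))
      - (f (v + (p:ℤ_[p])^N) - (f v + (p:ℤ_[p])^N * f' v)) := by ring
  have hval : ‖(p:ℤ_[p])^N * (f' v - f' u)‖ ≤ mu p (N + 1) := by
    rw [key]; exact nsub (nsub e1 e2) e3
  rw [mu_add] at hval
  exact csymm (pmul_cancel hval)

lemma fermat (x : ℤ_[p]) : ‖x^p - x‖ ≤ mu p 1 := by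
  rw [← cong_iff]
  have hZ : ∀ a : ZMod (p^1), a^p = a := by
    rw [pow_one]
    intro a
    exact ZMod.pow_card a
  rw [map_pow]
  exact hZ _

/-- congruent points give congruent derivative-products mod p -/
lemma Pr_cong (hcomp : IsCompatible f) (hdiff : UnifDiffMod1 f f' N)
    {j : ℕ} (hj : N ≤ j) {u v : ℤ_[p]} (h : ‖u - v‖ ≤ mu p j) (m : ℕ) :
    ‖Pr f f' u m - Pr f f' v m‖ ≤ mu p 1 := by
  induction m with
  | zero =>
    show ‖Pr f f' u 0 - Pr f f' v 0‖ ≤ _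
    unfold Pr
    rw [Finset.prod_range_zero, Finset.prod_range_zero, sub_self, norm_zero]
    exact le_of_lt (mu_pos _)
  | succ m ih =>
    rw [Pr_succ, Pr_succ]
    apply cmul ih
    apply dwd hdiff
    exact le_trans (le_trans (iter_compat hcomp m u v) h) (mu_antitone hj)

end Main

section Main2

variable {f f' : ℤ_[p] → ℤ_[p]} {N : ℕ}

/-- orbit formula at level j -/
lemma orbit_formula (hcomp : IsCompatible f) (hdiff : UnifDiffMod1 f f' N)
    {j : ℕ} (hj : N ≤ j) {u c : ℤ_[p]} (hc : f^[p^j] u = u + (p:ℤ_[p])^j * c) (m : ℕ) :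
    ‖f^[m * p^j] u -
      (u + (p:ℤ_[p])^j * (c * ∑ i ∈ Finset.range m, (Pr f f' u (p^j))^i))‖
      ≤ mu p (j + 1) := by
  induction m with
  | zero =>
    simp only [Nat.zero_mul, Function.iterate_zero_apply, Finset.range_zero,
      Finset.sum_empty, mul_zero, add_zero, sub_self, norm_zero]
    exact le_of_lt (mu_pos _)
  | succ m ih =>
    have hiter : f^[(m+1) * p^j] u = f^[p^j] (f^[m * p^j] u) := by
      rw [← Function.iterate_add_apply]
      congr 1
      ring
    have h1 : ‖f^[(m+1) * p^j] u
        - f^[p^j] (u + (p:ℤ_[p])^j * (c * ∑ i ∈ Finset.range m, (Pr f f' u (p^j))^i))‖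
        ≤ mu p (j + 1) := by
      rw [hiter]
      exact le_trans (iter_compat hcomp _ _ _) ih
    have h2 := exp_lemma hcomp hdiff hj u (c * ∑ i ∈ Finset.range m, (Pr f f' u (p^j))^i) (p^j)
    have h3 : f^[p^j] u + (p:ℤ_[p])^j *
          ((c * ∑ i ∈ Finset.range m, (Pr f f' u (p^j))^i) * Pr f f' u (p^j))
        = u + (p:ℤ_[p])^j * (c * ∑ i ∈ Finset.range (m+1), (Pr f f' u (p^j))^i) := by
      rw [hc, geom_sum_succ]
      ring
    rw [h3] at h2
    exact ctrans h1 h2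

/-- the derivative product along one cycle at level j is ≡ 1 mod p -/
lemma stepA (hcomp : IsCompatible f) (hdiff : UnifDiffMod1 f f' N)
    {j : ℕ} (hj : N ≤ j)
    (htr : ∀ x y : ℤ_[p], ∃ m : ℕ, ‖f^[m] x - y‖ ≤ mu p (j+1)) (u : ℤ_[p]) :
    ‖Pr f f' u (p^j) - 1‖ ≤ mu p 1 := by
  have F1 := bridge hcomp (j+1) htr
  have F2 := bridge hcomp j (fun x y => by
    obtain ⟨m, hm⟩ := htr x y
    exact ⟨m, le_trans hm (mu_antitone (Nat.le_succ j))⟩)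
  -- extract c
  have hdvd : ((p:ℤ_[p]))^j ∣ (f^[p^j] u - u) := by
    have := F2.1 u
    rw [show (mu p j : ℝ) = (p:ℝ)^(-(j:ℤ)) from rfl,
      PadicInt.norm_le_pow_iff_mem_span_pow, Ideal.mem_span_singleton] at this
    exact this
  obtain ⟨c, hc0⟩ := hdvd
  have hc : f^[p^j] u = u + (p:ℤ_[p])^j * c := by
    rw [← hc0]; ring
  set P := Pr f f' u (p^j) with hP
  -- c is a unit
  have hcu : ‖c‖ = 1 := by
    rcases norm_dichotomy c with h | h
    · exfalso
      have hsm : ‖f^[p^j] u - u‖ ≤ mu p (j+1) := by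
        rw [hc, add_sub_cancel_left, mu_add]
        exact pmul_le h
      have := F1.2 u (p^j) hsm
      have hlt : p^j < p^(j+1) := Nat.pow_lt_pow_right hp.out.one_lt (Nat.lt_succ_self j)
      have hle := Nat.le_of_dvd (pow_pos hp.out.pos j) this
      omega
    · exact h
  -- S p is small
  have hSp : ‖(∑ i ∈ Finset.range p, P^i)‖ ≤ mu p 1 := by
    have h1 := orbit_formula hcomp hdiff hj hc p
    have h2 : ‖f^[p * p^j] u - u‖ ≤ mu p (j+1) := by
      have := F1.1 u
      rwa [show p^(j+1) = p * p^j by ring] at this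
    have h3 : ‖(p:ℤ_[p])^j * (c * ∑ i ∈ Finset.range p, P^i)‖ ≤ mu p (j+1) := by
      have h5 : (p:ℤ_[p])^j * (c * ∑ i ∈ Finset.range p, P^i)
          = ((u + (p:ℤ_[p])^j * (c * ∑ i ∈ Finset.range p, P^i)) - f^[p * p^j] u)
            + (f^[p * p^j] u - u) := by ring
      rw [h5]
      exact nadd (csymm h1) h2
    rw [mu_add] at h3
    have h6 := pmul_cancel h3
    rwa [norm_mul, hcu, one_mul] at h6
  have hPp : ‖P^p - 1‖ ≤ mu p 1 := by
    rw [← geom_sum_mul, norm_mul]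
    calc ‖∑ i ∈ Finset.range p, P ^ i‖ * ‖P - 1‖ ≤ mu p 1 * 1 :=
          mul_le_mul hSp (PadicInt.norm_le_one _) (norm_nonneg _) (le_of_lt (mu_pos 1))
    _ = mu p 1 := mul_one _
  have hfin : P - 1 = (P^p - 1) - (P^p - P) := by ring
  rw [hfin]
  exact nsub hPp (fermat P)

end Main2

lemma mu_lt_one : (mu p 1 : ℝ) < 1 := by
  have h1 : (1:ℝ) < p := by exact_mod_cast hp.out.one_lt
  have : (mu p 1 : ℝ) * p = 1 := by
    unfold mu
    rw [show (-(1:ℕ):ℤ) = -1 by norm_num, zpow_neg_one]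
    field_simp
  nlinarith [mu_pos (p := p) 1]

lemma unit_of_close_one {x : ℤ_[p]} (h : ‖x - 1‖ ≤ mu p 1) : ‖x‖ = 1 := by
  rcases norm_dichotomy x with h2 | h2
  · exfalso
    have h3 : ‖(1:ℤ_[p])‖ ≤ mu p 1 := by
      have : (1:ℤ_[p]) = x - (x - 1) := by ring
      rw [this]
      exact nsub h2 h
    rw [norm_one] at h3
    exact absurd (lt_of_le_of_lt h3 mu_lt_one) (lt_irrefl _)
  · exact h2

lemma norm_natCast_le_mu_one {m : ℕ} (h : ‖((m:ℕ) : ℤ_[p])‖ ≤ mu p 1) : p ∣ m := by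
  have h2 : ‖(((m:ℤ)) : ℤ_[p])‖ < 1 := by
    push_cast
    exact lt_of_le_of_lt h mu_lt_one
  have := (PadicInt.norm_int_lt_one_iff_dvd (m:ℤ)).mp h2
  exact_mod_cast this


section Main3

variable {f f' : ℤ_[p] → ℤ_[p]} {N : ℕ}

lemma stepB {j : ℕ} (hA : ∀ v : ℤ_[p], ‖Pr f f' v (p^j) - 1‖ ≤ mu p 1)
    (u : ℤ_[p]) (m : ℕ) : ‖Pr f f' u (m * p^j) - 1‖ ≤ mu p 1 := by
  induction m with
  | zero =>
    rw [Nat.zero_mul]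
    unfold Pr
    rw [Finset.prod_range_zero, sub_self, norm_zero]
    exact le_of_lt (mu_pos _)
  | succ m ih =>
    rw [show (m+1) * p^j = m * p^j + p^j from by ring, Pr_split]
    have := cmul ih (hA (f^[m * p^j] u))
    simpa using this

lemma deriv_unit {j : ℕ} (hA : ∀ v : ℤ_[p], ‖Pr f f' v (p^j) - 1‖ ≤ mu p 1)
    (u : ℤ_[p]) : ‖f' u‖ = 1 := by
  have h1 : ‖Pr f f' u (p^j)‖ = 1 := unit_of_close_one (hA u)
  obtain ⟨t, ht⟩ : ∃ t, p^j = t+1 :=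
    ⟨p^j - 1, by have := pow_pos hp.out.pos j; omega⟩
  rw [ht] at h1
  unfold Pr at h1
  rw [Finset.prod_range_succ', Function.iterate_zero_apply, norm_mul] at h1
  have ha := PadicInt.norm_le_one (∏ i ∈ Finset.range t, f' (f^[i+1] u))
  have hb := PadicInt.norm_le_one (f' u)
  have h0a := norm_nonneg (∏ i ∈ Finset.range t, f' (f^[i+1] u))
  have h0b := norm_nonneg (f' u)
  nlinarith

variable {K : ℕ} {c : ℤ_[p] → ℤ_[p]}

/-- fiber translation -/
lemma step5 (hcomp : IsCompatible f) (hdiff : UnifDiffMod1 f f' N) (hK : N ≤ K)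
    (hc : ∀ u : ℤ_[p], f^[p^K] u = u + (p:ℤ_[p])^K * c u)
    (hB : ∀ u : ℤ_[p], ‖Pr f f' u (p^K) - 1‖ ≤ mu p 1)
    (u t : ℤ_[p]) :
    ‖f^[p^K] (u + (p:ℤ_[p])^K * t) - (u + (p:ℤ_[p])^K * (c u + t))‖ ≤ mu p (K+1) := by
  have h1 := exp_lemma hcomp hdiff hK u t (p^K)
  have h2 : ‖(f^[p^K] u + (p:ℤ_[p])^K * (t * Pr f f' u (p^K)))
      - (u + (p:ℤ_[p])^K * (c u + t))‖ ≤ mu p (K+1) := by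
    have he : (f^[p^K] u + (p:ℤ_[p])^K * (t * Pr f f' u (p^K)))
        - (u + (p:ℤ_[p])^K * (c u + t))
        = (p:ℤ_[p])^K * (t * (Pr f f' u (p^K) - 1)) := by
      rw [hc u]; ring
    rw [he, mu_add]
    apply pmul_le
    calc ‖t * (Pr f f' u (p^K) - 1)‖ = ‖t‖ * ‖Pr f f' u (p^K) - 1‖ := norm_mul _ _
    _ ≤ 1 * mu p 1 :=
        mul_le_mul (PadicInt.norm_le_one t) (hB u) (norm_nonneg _) zero_le_one
    _ = mu p 1 := one_mul _
  exact ctrans h1 h2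

/-- c is locally constant mod p -/
lemma step6 (hcomp : IsCompatible f) (hdiff : UnifDiffMod1 f f' N) (hK : N ≤ K)
    (hc : ∀ u : ℤ_[p], f^[p^K] u = u + (p:ℤ_[p])^K * c u)
    (hB : ∀ u : ℤ_[p], ‖Pr f f' u (p^K) - 1‖ ≤ mu p 1)
    {u v : ℤ_[p]} (h : ‖u - v‖ ≤ mu p K) : ‖c u - c v‖ ≤ mu p 1 := by
  obtain ⟨t, ht⟩ : ((p:ℤ_[p]))^K ∣ (v - u) := by
    rw [← Ideal.mem_span_singleton]
    exact (PadicInt.norm_le_pow_iff_mem_span_pow (v-u) K).mp (csymm h)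
  have hv : v = u + (p:ℤ_[p])^K * t := by rw [← ht]; ring
  have h5 := step5 hcomp hdiff hK hc hB u t
  rw [← hv] at h5
  have h6 : f^[p^K] v = u + (p:ℤ_[p])^K * (c v + t) := by
    rw [hc v, hv]; ring
  rw [h6] at h5
  have h7 : (u + (p:ℤ_[p])^K * (c v + t)) - (u + (p:ℤ_[p])^K * (c u + t))
      = (p:ℤ_[p])^K * (c v - c u) := by ring
  have h8 : ‖(p:ℤ_[p])^K * (c v - c u)‖ ≤ mu p (K+1) := by rw [← h7]; exact h5
  rw [mu_add] at h8
  exact csymm (pmul_cancel h8)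

/-- c transforms by the derivative -/
lemma step7 (hdiff : UnifDiffMod1 f f' N) (hK : N ≤ K)
    (hc : ∀ u : ℤ_[p], f^[p^K] u = u + (p:ℤ_[p])^K * c u)
    (u : ℤ_[p]) : ‖c (f u) - c u * f' u‖ ≤ mu p 1 := by
  have hA := hdiff_mu hdiff u ((p:ℤ_[p])^K * c u) K hK (by
    have := pmul_le (a := K) (PadicInt.norm_le_one (c u))
    simpa using this)
  have hB2 : f u + (p:ℤ_[p])^K * c (f u) = f (u + (p:ℤ_[p])^K * c u) := by
    rw [← hc (f u), ← hc u, ← Function.iterate_succ_apply, Function.iterate_succ_apply']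
  have h9 : (p:ℤ_[p])^K * (c (f u) - c u * f' u)
      = f (u + (p:ℤ_[p])^K * c u) - (f u + (p:ℤ_[p])^K * c u * f' u) := by
    rw [← hB2]; ring
  have h10 : ‖(p:ℤ_[p])^K * (c (f u) - c u * f' u)‖ ≤ mu p (K+1) := by rw [h9]; exact hA
  rw [mu_add] at h10
  exact pmul_cancel h10

/-- iterated fiber translation -/
lemma step9 (hcomp : IsCompatible f) (hdiff : UnifDiffMod1 f f' N) (hK : N ≤ K)
    (hc : ∀ u : ℤ_[p], f^[p^K] u = u + (p:ℤ_[p])^K * c u)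
    (hB : ∀ u : ℤ_[p], ‖Pr f f' u (p^K) - 1‖ ≤ mu p 1)
    (u : ℤ_[p]) (m : ℕ) :
    ‖f^[m * p^K] u - (u + (p:ℤ_[p])^K * ((m:ℤ_[p]) * c u))‖ ≤ mu p (K+1) := by
  induction m with
  | zero =>
    simp only [Nat.zero_mul, Function.iterate_zero_apply, Nat.cast_zero, zero_mul,
      mul_zero, add_zero, sub_self, norm_zero]
    exact le_of_lt (mu_pos _)
  | succ m ih =>
    have hiter : f^[(m+1) * p^K] u = f^[p^K] (f^[m * p^K] u) := by
      rw [← Function.iterate_add_apply]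
      congr 1
      ring
    have h1 : ‖f^[(m+1) * p^K] u - f^[p^K] (u + (p:ℤ_[p])^K * ((m:ℤ_[p]) * c u))‖
        ≤ mu p (K+1) := by
      rw [hiter]
      exact le_trans (iter_compat hcomp _ _ _) ih
    have h2 := step5 hcomp hdiff hK hc hB u ((m:ℤ_[p]) * c u)
    have h3 : u + (p:ℤ_[p])^K * (c u + (m:ℤ_[p]) * c u)
        = u + (p:ℤ_[p])^K * (((m:ℕ)+1 : ℤ_[p]) * c u) := by ring
    rw [h3] at h2
    have h4 : (((m:ℕ)+1 : ℤ_[p])) = (((m+1 : ℕ)) : ℤ_[p]) := by push_cast; ring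
    rw [h4] at h2
    exact ctrans h1 h2

/-- dichotomy for c -/
lemma step8 (hcomp : IsCompatible f) (hdiff : UnifDiffMod1 f f' N) (hK : N ≤ K)
    (hc : ∀ u : ℤ_[p], f^[p^K] u = u + (p:ℤ_[p])^K * c u)
    (hB : ∀ u : ℤ_[p], ‖Pr f f' u (p^K) - 1‖ ≤ mu p 1)
    (hder : ∀ u : ℤ_[p], ‖f' u‖ = 1)
    (htr : ∀ x y : ℤ_[p], ∃ m : ℕ, ‖f^[m] x - y‖ ≤ mu p K) :
    (∀ u : ℤ_[p], ‖c u‖ ≤ mu p 1) ∨ (∀ u : ℤ_[p], ‖c u‖ = 1) := by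
  rcases norm_dichotomy (c 0) with h0 | h0
  · left
    have horb : ∀ m : ℕ, ‖c (f^[m] 0)‖ ≤ mu p 1 := by
      intro m
      induction m with
      | zero => exact h0
      | succ m ih =>
        rw [Function.iterate_succ_apply']
        have h1 := step7 hdiff hK hc (f^[m] 0)
        have h2 : c (f (f^[m] 0)) = (c (f (f^[m] 0)) - c (f^[m] 0) * f' (f^[m] 0))
            + c (f^[m] 0) * f' (f^[m] 0) := by ring
        rw [h2]
        apply nadd h1
        rw [norm_mul, hder, mul_one]
        exact ih
    intro u
    obtain ⟨m, hm⟩ := htr 0 u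
    have h6 := step6 hcomp hdiff hK hc hB hm
    have h7 : c u = c (f^[m] 0) - (c (f^[m] 0) - c u) := by ring
    rw [h7]
    exact nsub (horb m) h6
  · right
    have horb : ∀ m : ℕ, ‖c (f^[m] 0)‖ = 1 := by
      intro m
      induction m with
      | zero => exact h0
      | succ m ih =>
        rw [Function.iterate_succ_apply']
        rcases norm_dichotomy (c (f (f^[m] 0))) with h2 | h2
        · exfalso
          have h1 := step7 hdiff hK hc (f^[m] 0)
          have h3 : c (f^[m] 0) * f' (f^[m] 0)
              = c (f (f^[m] 0)) - (c (f (f^[m] 0)) - c (f^[m] 0) * f' (f^[m] 0)) := by ring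
          have h4 : ‖c (f^[m] 0) * f' (f^[m] 0)‖ ≤ mu p 1 := by
            rw [h3]; exact nsub h2 h1
          rw [norm_mul, hder, mul_one, ih] at h4
          exact absurd (lt_of_le_of_lt h4 mu_lt_one) (lt_irrefl _)
        · exact h2
    intro u
    rcases norm_dichotomy (c u) with h2 | h2
    · exfalso
      obtain ⟨m, hm⟩ := htr 0 u
      have h6 := step6 hcomp hdiff hK hc hB hm
      have h7 : c (f^[m] 0) = (c (f^[m] 0) - c u) + c u := by ring
      have h8 : ‖c (f^[m] 0)‖ ≤ mu p 1 := by rw [h7]; exact nadd h6 h2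
      rw [horb m] at h8
      exact absurd (lt_of_le_of_lt h8 mu_lt_one) (lt_irrefl _)
    · exact h2

end Main3


lemma cycle_of_full_period {α : Type*} [Fintype α] (g : α → α) (n' : ℕ) (_hn : 0 < n')
    (hcard : Fintype.card α = n') (a0 : α)
    (hid : g^[n'] a0 = a0)
    (hper : ∀ m : ℕ, g^[m] a0 = a0 → n' ∣ m) :
    ∀ a b : α, ∃ m : ℕ, g^[m] a = b := by
  classical
  have hinj : ∀ i l : ℕ, i < n' → l < n' → g^[i] a0 = g^[l] a0 → i = l := by
    intro i l hi hl hil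
    by_contra hne
    wlog hlt : i < l generalizing i l
    · exact this l i hl hi hil.symm (Ne.symm hne) (by omega)
    have h1 : g^[n' - l + i] a0 = a0 := by
      have h2 : g^[n' - l] (g^[l] a0) = a0 := by
        rw [← Function.iterate_add_apply, Nat.sub_add_cancel hl.le]
        exact hid
      rw [← hil, ← Function.iterate_add_apply] at h2
      exact h2
    have := hper _ h1
    have := Nat.le_of_dvd (by omega) this
    omega
  have himage : ∀ b : α, ∃ i : ℕ, i < n' ∧ g^[i] a0 = b := by
    have hcard2 : ((Finset.range n').image (fun i => g^[i] a0)).card = Fintype.card α := by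
      rw [Finset.card_image_of_injOn, Finset.card_range, hcard]
      intro i hi l hl
      exact hinj i l (Finset.mem_range.mp hi) (Finset.mem_range.mp hl)
    have huniv := (Finset.card_eq_iff_eq_univ _).mp hcard2
    intro b
    have hb : b ∈ (Finset.range n').image (fun i => g^[i] a0) := by
      rw [huniv]; exact Finset.mem_univ b
    obtain ⟨i, hi, hgi⟩ := Finset.mem_image.mp hb
    exact ⟨i, Finset.mem_range.mp hi, hgi⟩
  intro a b
  obtain ⟨i, hi, hia⟩ := himage a
  obtain ⟨l, _, hlb⟩ := himage b
  refine ⟨(n' - i) + l, ?_⟩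
  rw [← hia, ← Function.iterate_add_apply]
  have harith : (n' - i) + l + i = l + n' := by omega
  rw [harith, Function.iterate_add_apply, hid, hlb]

end Stmt12Aux

open PadicInt Function Finset Stmt12Aux in
theorem stmt12 {p : ℕ} [Fact p.Prime] (f f' : ℤ_[p] → ℤ_[p]) (N : ℕ)
    (hcomp : IsCompatible f) (hdiff : UnifDiffMod1 f f' N)
    (k : ℕ) (hk : N < k) (htrans : TransitiveMod f k) :
    ∃ g : ZMod (p ^ (k + 1)) → ZMod (p ^ (k + 1)),
      (∀ x : ℤ_[p], g (PadicInt.toZModPow (k + 1) x) = PadicInt.toZModPow (k + 1) (f x)) ∧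
      ((∀ a b : ZMod (p ^ (k + 1)), ∃ m : ℕ, g^[m] a = b) ∨
        ((∀ a, g^[p ^ k] a = a) ∧
          ∀ (a : ZMod (p ^ (k + 1))) (m : ℕ), 0 < m → m < p ^ k → g^[m] a ≠ a)) := by
  have hprime : p.Prime := Fact.out
  obtain ⟨j, rfl⟩ : ∃ j, k = j + 1 := ⟨k-1, by omega⟩
  have hj : N ≤ j := by omega
  have hK : N ≤ j + 1 := by omega
  haveI : NeZero (p^(j+1+1)) := ⟨pow_ne_zero _ hprime.ne_zero⟩
  -- transitivity in norm form at level j+1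
  obtain ⟨g0, hg0c, hg0t⟩ := htrans
  have hg0iter : ∀ (m : ℕ) (x : ℤ_[p]),
      g0^[m] (PadicInt.toZModPow (j+1) x) = PadicInt.toZModPow (j+1) (f^[m] x) := by
    intro m
    induction m with
    | zero => intro x; rfl
    | succ m ih =>
      intro x
      rw [Function.iterate_succ_apply, hg0c, ih (f x), ← Function.iterate_succ_apply]
  have htrK : ∀ x y : ℤ_[p], ∃ m : ℕ, ‖f^[m] x - y‖ ≤ mu p (j+1) := by
    intro x y
    obtain ⟨m, hm⟩ := hg0t (PadicInt.toZModPow (j+1) x) (PadicInt.toZModPow (j+1) y)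
    refine ⟨m, (cong_iff _ _ _).mp ?_⟩
    rw [← hg0iter m x, hm]
  have F1 := bridge hcomp (j+1) htrK
  have hA : ∀ u : ℤ_[p], ‖Pr f f' u (p^j) - 1‖ ≤ mu p 1 :=
    fun u => stepA hcomp hdiff hj htrK u
  have hB : ∀ u : ℤ_[p], ‖Pr f f' u (p^(j+1)) - 1‖ ≤ mu p 1 := by
    intro u
    have := stepB hA u p
    rwa [show p * p^j = p^(j+1) from by ring] at this
  have hder : ∀ u : ℤ_[p], ‖f' u‖ = 1 := deriv_unit hA
  -- choose the fiber-translation parameter c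
  have hcex : ∀ u : ℤ_[p], ∃ cu : ℤ_[p], f^[p^(j+1)] u = u + (p:ℤ_[p])^(j+1) * cu := by
    intro u
    obtain ⟨cu, hcu⟩ : ((p:ℤ_[p]))^(j+1) ∣ (f^[p^(j+1)] u - u) := by
      rw [← Ideal.mem_span_singleton]
      exact (PadicInt.norm_le_pow_iff_mem_span_pow _ _).mp (F1.1 u)
    exact ⟨cu, by rw [← hcu]; ring⟩
  choose c hc using hcex
  refine ⟨gmap f (j+1+1), fun x => gmap_spec hcomp _ x, ?_⟩
  set g : ZMod (p^(j+1+1)) → ZMod (p^(j+1+1)) := gmap f (j+1+1) with hgdef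
  rcases step8 hcomp hdiff hK hc hB hder htrK with hsmall | hunit
  · -- CASE A : p disjoint cycles of length p^(j+1)
    right
    constructor
    · intro a
      have hx : ‖f^[p^(j+1)] ((a.val : ℤ_[p])) - ((a.val : ℤ_[p]))‖ ≤ mu p (j+1+1) := by
        rw [hc, add_sub_cancel_left]
        have := pmul_le (a := j+1) (hsmall ((a.val : ℤ_[p])))
        rwa [← mu_add] at this
      have hcong := (cong_iff (j+1+1) _ _).mpr hx
      calc g^[p^(j+1)] a
          = g^[p^(j+1)] (PadicInt.toZModPow (j+1+1) ((a.val : ℤ_[p]))) := by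
            rw [lift_val]
        _ = PadicInt.toZModPow (j+1+1) (f^[p^(j+1)] ((a.val : ℤ_[p]))) :=
            gmap_iter hcomp _ _ _
        _ = PadicInt.toZModPow (j+1+1) ((a.val : ℤ_[p])) := hcong
        _ = a := lift_val _ _
    · intro a m hm0 hmlt heq
      have h2 : PadicInt.toZModPow (j+1+1) (f^[m] ((a.val : ℤ_[p])))
          = PadicInt.toZModPow (j+1+1) ((a.val : ℤ_[p])) := by
        rw [← gmap_iter hcomp, lift_val]
        exact heq
      have h1 : ‖f^[m] ((a.val : ℤ_[p])) - ((a.val : ℤ_[p]))‖ ≤ mu p (j+1) :=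
        le_trans ((cong_iff _ _ _).mp h2) (mu_antitone (by omega))
      have hdvd := F1.2 _ m h1
      have := Nat.le_of_dvd hm0 hdvd
      omega
  · -- CASE B : a single cycle of length p^(j+2)
    left
    have hid : ∀ x : ℤ_[p],
        g^[p^(j+1+1)] (PadicInt.toZModPow (j+1+1) x) = PadicInt.toZModPow (j+1+1) x := by
      intro x
      have h9 := step9 hcomp hdiff hK hc hB x p
      have hnorm : ‖(p:ℤ_[p])^(j+1) * (((p:ℕ):ℤ_[p]) * c x)‖ ≤ mu p (j+1+1) := by
        rw [show (p:ℤ_[p])^(j+1) * (((p:ℕ):ℤ_[p]) * c x) = (p:ℤ_[p])^(j+1+1) * c x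
          from by ring]
        have := pmul_le (a := j+1+1) (PadicInt.norm_le_one (c x))
        simpa using this
      have h10 : ‖f^[p * p^(j+1)] x - x‖ ≤ mu p (j+1+1) := by
        have h11 : f^[p * p^(j+1)] x - x =
            (f^[p * p^(j+1)] x - (x + (p:ℤ_[p])^(j+1) * (((p:ℕ):ℤ_[p]) * c x)))
            + (p:ℤ_[p])^(j+1) * (((p:ℕ):ℤ_[p]) * c x) := by ring
        rw [h11]
        exact nadd h9 hnorm
      rw [show p * p^(j+1) = p^(j+1+1) from by ring] at h10
      rw [gmap_iter hcomp]
      exact (cong_iff _ _ _).mpr h10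
    have hid' : ∀ a : ZMod (p^(j+1+1)), g^[p^(j+1+1)] a = a := by
      intro a
      have := hid ((a.val : ℤ_[p]))
      rwa [lift_val] at this
    have hper' : ∀ (a : ZMod (p^(j+1+1))) (m : ℕ), g^[m] a = a → p^(j+1+1) ∣ m := by
      intro a m heq
      have h2 : PadicInt.toZModPow (j+1+1) (f^[m] ((a.val : ℤ_[p])))
          = PadicInt.toZModPow (j+1+1) ((a.val : ℤ_[p])) := by
        rw [← gmap_iter hcomp, lift_val]
        exact heq
      set x : ℤ_[p] := ((a.val : ℤ_[p])) with hxdef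
      have h1 : ‖f^[m] x - x‖ ≤ mu p (j+1+1) := (cong_iff _ _ _).mp h2
      have hq : p^(j+1) ∣ m := F1.2 x m (le_trans h1 (mu_antitone (by omega)))
      obtain ⟨m', rfl⟩ := hq
      have h9 := step9 hcomp hdiff hK hc hB x m'
      rw [show m' * p^(j+1) = p^(j+1) * m' from by ring] at h9
      have h3 : ‖(p:ℤ_[p])^(j+1) * ((m':ℤ_[p]) * c x)‖ ≤ mu p (j+1+1) := by
        have h4 : (p:ℤ_[p])^(j+1) * ((m':ℤ_[p]) * c x) =
            ((x + (p:ℤ_[p])^(j+1) * ((m':ℤ_[p]) * c x)) - f^[p^(j+1) * m'] x)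
            + (f^[p^(j+1) * m'] x - x) := by ring
        rw [h4]
        exact nadd (csymm h9) h1
      rw [show ((j+1+1:ℕ)) = (j+1) + 1 from rfl, mu_add] at h3
      have h5 := pmul_cancel h3
      rw [norm_mul, hunit x, mul_one] at h5
      have h6 : p ∣ m' := norm_natCast_le_mu_one h5
      obtain ⟨m'', rfl⟩ := h6
      exact ⟨m'', by ring⟩
    -- combinatorics : one full orbit
    haveI : NeZero (p^(j+1+1)) := ⟨pow_ne_zero _ hprime.ne_zero⟩
    exact cycle_of_full_period g (p^(j+1+1)) (pow_pos hprime.pos _) (ZMod.card _)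
      (PadicInt.toZModPow (j+1+1) 0) (hid' _) (hper' _)
end

section
/- The function κ(i) = ord_p(i!) − ⌊log_p i⌋ is nondecreasing on the positive integers, where ord_p denotes the p-adic valuation and ⌊log_p i⌋ is the integer part of the base-p logarithm. -/
/-!
The valuation `ord_p(i!)` grows by `ord_p(i + 1)` from `i` to `i + 1`, while `⌊log_p⌋` jumps
only at powers of `p`, where `log_p (i + 1) = ord_p (i + 1)`; in either case the growth of the
valuation covers the growth of the logarithm.
-/

namespace Nat

variable {p : ℕ} [Fact p.Prime]

lemma padicValNat_factorial_succ (n : ℕ) :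
    padicValNat p (n + 1)! = padicValNat p (n + 1) + padicValNat p n ! := by
  rw [factorial_succ, padicValNat.mul n.succ_ne_zero n.factorial_ne_zero]

lemma log_succ_le_log_add_padicValNat (n : ℕ) :
    log p (n + 1) ≤ log p n + padicValNat p (n + 1) := by
  rw [← max_log_padicValNat_succ_eq_log_succ]
  exact max_le_add_of_nonneg (zero_le _) (zero_le _)

end Nat

theorem stmt14 {p : ℕ} (hp : p.Prime) :
    ∀ i : ℕ, 1 ≤ i →
      (padicValNat p (Nat.factorial i) : ℤ) - (Nat.log p i : ℤ) ≤
        (padicValNat p (Nat.factorial (i + 1)) : ℤ) - (Nat.log p (i + 1) : ℤ) := by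
  have : Fact p.Prime := ⟨hp⟩
  intro i _
  have hlog := Nat.log_succ_le_log_add_padicValNat (p := p) i
  rw [Nat.padicValNat_factorial_succ]
  omega
end

section
/- Let p be a prime and s(x) = Σ_{i≥0} c_i x^i a power series with coefficients c_i ∈ ℤ_p satisfying c_i → 0 in the p-adic topology. If s(x) = Σ_{i≥0} s_i·C(x,i) is its Mahler (interpolation) expansion in binomial coefficients, then s_i / i! ∈ ℤ_p for every i ≥ 0. -/
open scoped fwdDiff
open Finset

variable {p : ℕ} [Fact p.Prime]



lemma shift_fwdDiff_iter (g : ℤ_[p] → ℤ_[p]) (n : ℕ) (x : ℤ_[p]) :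
    (fwdDiff 1)^[n] (fun y => g (y+1)) x = (fwdDiff 1)^[n] g (x+1) := by
  induction n generalizing g x with
  | zero => rfl
  | succ n ih =>
      rw [Function.iterate_succ_apply, Function.iterate_succ_apply]
      have : fwdDiff 1 (fun y => g (y+1)) = fun y => (fwdDiff 1 g) (y+1) := by
        funext y; simp [fwdDiff]
      rw [this, ih]

lemma prod_rule (g : ℤ_[p] → ℤ_[p]) (i : ℕ) (x : ℤ_[p]) :
    (fwdDiff 1)^[i+1] (fun y => y * g y) x
      = x * (fwdDiff 1)^[i+1] g x + (i+1 : ℕ) * (fwdDiff 1)^[i] g (x+1) := by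
  induction i generalizing g x with
  | zero =>
      simp only [zero_add, Function.iterate_one, Function.iterate_zero, id_eq]
      simp only [fwdDiff]
      push_cast
      ring
  | succ i ih =>
      rw [Function.iterate_succ_apply]
      have h1 : fwdDiff 1 (fun y => y * g y)
          = (fun y => y * (fwdDiff 1 g) y) + (fun y => g (y+1)) := by
        funext y; simp [fwdDiff]; ring
      rw [h1, fwdDiff_iter_add, Pi.add_apply, ih, shift_fwdDiff_iter,
        ← Function.iterate_succ_apply, ← Function.iterate_succ_apply]
      push_cast
      ring

lemma pow_dvd (j : ℕ) : ∀ (i : ℕ) (x : ℤ_[p]),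
    (Nat.factorial i : ℤ_[p]) ∣ (fwdDiff 1)^[i] (fun y => y ^ j) x := by
  induction j with
  | zero =>
      intro i x
      rcases i with _ | i
      · simp
      · have h0 : (fwdDiff (1:ℤ_[p])) (fun _ => (1:ℤ_[p])) = fun _ => 0 := by
          funext y; simp [fwdDiff]
        have : (fwdDiff (1:ℤ_[p]))^[i+1] (fun y => y ^ 0) = fun _ => 0 := by
          rw [Function.iterate_succ_apply]
          simp only [pow_zero, h0]
          exact Function.iterate_fixed (by funext y; simp [fwdDiff]) i
        rw [this]
        simp
  | succ j ih =>
      intro i x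
      rcases i with _ | i
      · simp
      · have hfun : (fun y : ℤ_[p] => y ^ (j+1)) = fun y => y * y ^ j := by
          funext y; ring
        rw [hfun, prod_rule]
        refine dvd_add (Dvd.dvd.mul_left (ih _ x) x) ?_
        rw [Nat.factorial_succ]
        push_cast
        exact mul_dvd_mul dvd_rfl (ih i (x+1))

theorem stmt15 {p : ℕ} [Fact p.Prime] (c : ℕ → ℤ_[p])
    (hc : Filter.Tendsto c Filter.atTop (nhds 0)) :
    letI s : ℤ_[p] → ℤ_[p] := fun x => ∑' i : ℕ, c i * x ^ i
    letI fd : (ℤ_[p] → ℤ_[p]) → (ℤ_[p] → ℤ_[p]) := fun g x => g (x + 1) - g x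
    ∀ i : ℕ, (Nat.factorial i : ℤ_[p]) ∣ (fd^[i] s) 0 := by
  show ∀ i : ℕ, (Nat.factorial i : ℤ_[p]) ∣
    ((fwdDiff (1:ℤ_[p]))^[i] (fun x => ∑' j : ℕ, c j * x ^ j)) 0
  intro i
  have hctend : Filter.Tendsto (fun j => ‖c j‖) Filter.atTop (nhds 0) := by
    simpa using hc.norm
  have hsum : ∀ (f : ℕ → ℤ_[p]), (∀ j, ‖f j‖ ≤ ‖c j‖) → Summable f := by
    intro f hf
    apply NonarchimedeanAddGroup.summable_of_tendsto_cofinite_zero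
    rw [Nat.cofinite_eq_atTop]
    exact squeeze_zero_norm hf hctend
  have hbound : ∀ (x : ℤ_[p]) j, ‖c j * x ^ j‖ ≤ ‖c j‖ := by
    intro x j
    calc ‖c j * x ^ j‖ ≤ ‖c j‖ * ‖x ^ j‖ := norm_mul_le _ _
    _ ≤ ‖c j‖ * 1 := by
        exact mul_le_mul_of_nonneg_left (PadicInt.norm_le_one _) (norm_nonneg _)
    _ = ‖c j‖ := mul_one _
  have hsummable : ∀ x : ℤ_[p], Summable fun j => c j * x ^ j :=
    fun x => hsum _ (hbound x)
  have key : (fwdDiff (1:ℤ_[p]))^[i] (fun x => ∑' j : ℕ, c j * x ^ j) 0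
      = ∑' j : ℕ, c j * (fwdDiff (1:ℤ_[p]))^[i] (fun y => y ^ j) 0 := by
    rw [fwdDiff_iter_eq_sum_shift]
    have step1 : ∀ k ∈ Finset.range (i+1),
        ((-1:ℤ)^(i-k) * i.choose k) • ((fun x : ℤ_[p] => ∑' j : ℕ, c j * x ^ j) (0 + k • (1:ℤ_[p])))
        = ∑' j : ℕ, ((-1:ℤ)^(i-k) * i.choose k) • (c j * (0 + k • (1:ℤ_[p])) ^ j) := by
      intro k _
      exact (Summable.tsum_const_smul _ (hsummable _)).symm
    rw [Finset.sum_congr rfl step1]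
    rw [← Summable.tsum_finsetSum (fun k _ => (hsummable _).const_smul _)]
    refine tsum_congr fun j => ?_
    rw [fwdDiff_iter_eq_sum_shift, Finset.mul_sum]
    exact Finset.sum_congr rfl fun k _ => (mul_smul_comm _ _ _).symm
  rw [key]
  choose w hw using fun j => pow_dvd (p := p) j i 0
  have h2 : ∀ j : ℕ, c j * (fwdDiff (1:ℤ_[p]))^[i] (fun y => y ^ j) 0
      = (Nat.factorial i : ℤ_[p]) * (c j * w j) := by
    intro j; rw [hw j]; ring
  rw [tsum_congr h2]
  have hws : Summable fun j => c j * w j := by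
    refine hsum _ fun j => ?_
    calc ‖c j * w j‖ ≤ ‖c j‖ * ‖w j‖ := norm_mul_le _ _
    _ ≤ ‖c j‖ * 1 := mul_le_mul_of_nonneg_left (PadicInt.norm_le_one _) (norm_nonneg _)
    _ = ‖c j‖ := mul_one _
  rw [hws.tsum_mul_left]
  exact Dvd.intro _ rfl
end

section
/- Let p be a prime and u, v : ℤ_p → ℤ_p be 1-Lipschitz (compatible) functions with u(z) ≡ 1 (mod p) for all z ∈ ℤ_p. Then the function f(z) = u(z)^{v(z)} (defined via the p-adic exponential on 1 + pℤ_p) is well-defined, takes values in ℤ_p, and is 1-Lipschitz (compatible). -/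
open IsLocalRing

theorem pow_sub_pow_dvd_of_modEq {R : Type*} [CommRing R] {p : ℕ} {a : R} (ha : (p : R) ∣ a - 1)
    {m k n : ℕ} (h : m ≡ k [MOD p ^ n]) : (p : R) ^ n ∣ a ^ m - a ^ k := by
  wlog hkm : k ≤ m generalizing m k
  · rw [← neg_sub]
    exact (this h.symm (le_of_not_ge hkm)).neg_right
  obtain ⟨t, ht⟩ := (Nat.modEq_iff_dvd' hkm).1 h.symm
  have hperiod : (p : R) ^ n ∣ a ^ p ^ n - 1 := by
    simpa using (pow_dvd_pow _ n.le_succ).trans (dvd_sub_pow_of_dvd_sub ha n)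
  have hfactor : a ^ m - a ^ k = a ^ k * ((a ^ p ^ n) ^ t - 1 ^ t) := by
    rw [one_pow, ← pow_mul, ← ht, mul_sub, ← pow_add, Nat.add_sub_cancel' hkm, mul_one]
  rw [hfactor]
  exact (hperiod.trans (sub_dvd_pow_sub_pow _ _ t)).mul_left _

namespace PadicInt

variable {p : ℕ} [Fact p.Prime]

theorem pow_dvd_iff_norm_le (x : ℤ_[p]) (n : ℕ) :
    (p : ℤ_[p]) ^ n ∣ x ↔ ‖x‖ ≤ (p : ℝ) ^ (-n : ℤ) := by
  rw [← Ideal.mem_span_singleton, ← norm_le_pow_iff_mem_span_pow]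

theorem pow_dvd_natCast_sub_natCast_iff (a b n : ℕ) :
    (p : ℤ_[p]) ^ n ∣ (a : ℤ_[p]) - b ↔ a ≡ b [MOD p ^ n] := by
  rw [Nat.ModEq.comm, Nat.modEq_iff_dvd, Nat.cast_pow, ← pow_p_dvd_int_iff]
  push_cast
  rfl

theorem smodEq_maximalIdeal_pow_iff (x y : ℤ_[p]) (n : ℕ) :
    x ≡ y [SMOD (maximalIdeal ℤ_[p] ^ n • ⊤ : Submodule ℤ_[p] ℤ_[p])] ↔
      (p : ℤ_[p]) ^ n ∣ x - y := by
  simp only [← Ideal.one_eq_top, smul_eq_mul, mul_one, SModEq.sub_mem, maximalIdeal_eq_span_p,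
    Ideal.span_singleton_pow, Ideal.mem_span_singleton]

theorem exists_pow_dvd_sub_of_pow_dvd_sub {s : ℕ → ℤ_[p]}
    (hs : ∀ {m n}, m ≤ n → (p : ℤ_[p]) ^ m ∣ s m - s n) :
    ∃ L, ∀ n, (p : ℤ_[p]) ^ n ∣ L - s n := by
  obtain ⟨L, hL⟩ := (IsAdicComplete.toIsPrecomplete (I := maximalIdeal ℤ_[p])).prec
    fun h => (smodEq_maximalIdeal_pow_iff _ _ _).2 (hs h)
  exact ⟨L, fun n => dvd_sub_comm.1 ((smodEq_maximalIdeal_pow_iff _ _ _).1 (hL n))⟩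

theorem appr_modEq_appr {z w : ℤ_[p]} {n m k : ℕ} (hm : n ≤ m) (hk : n ≤ k)
    (hzw : (p : ℤ_[p]) ^ n ∣ z - w) : z.appr m ≡ w.appr k [MOD p ^ n] := by
  have hz : (p : ℤ_[p]) ^ n ∣ z - z.appr m :=
    (pow_dvd_pow _ hm).trans (Ideal.mem_span_singleton.1 (appr_spec m z))
  have hw : (p : ℤ_[p]) ^ n ∣ w - w.appr k :=
    (pow_dvd_pow _ hk).trans (Ideal.mem_span_singleton.1 (appr_spec k w))
  rw [← pow_dvd_natCast_sub_natCast_iff]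
  convert (hzw.sub hz).add hw using 1
  ring

theorem pow_appr_sub_pow_appr_dvd {a b z w : ℤ_[p]} {n m k : ℕ} (hb : (p : ℤ_[p]) ∣ b - 1)
    (hab : (p : ℤ_[p]) ^ n ∣ a - b) (hzw : (p : ℤ_[p]) ^ n ∣ z - w) (hm : n ≤ m) (hk : n ≤ k) :
    (p : ℤ_[p]) ^ n ∣ a ^ z.appr m - b ^ w.appr k := by
  have hbase : (p : ℤ_[p]) ^ n ∣ a ^ z.appr m - b ^ z.appr m :=
    hab.trans (sub_dvd_pow_sub_pow _ _ _)
  have hexp : (p : ℤ_[p]) ^ n ∣ b ^ z.appr m - b ^ w.appr k :=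
    pow_sub_pow_dvd_of_modEq hb (appr_modEq_appr hm hk hzw)
  simpa only [sub_add_sub_cancel] using hbase.add hexp

theorem exists_pow_dvd_sub_pow_appr {a : ℤ_[p]} (ha : (p : ℤ_[p]) ∣ a - 1) (z : ℤ_[p]) :
    ∃ c, ∀ n, (p : ℤ_[p]) ^ n ∣ c - a ^ z.appr n :=
  exists_pow_dvd_sub_of_pow_dvd_sub fun hmn =>
    pow_appr_sub_pow_appr_dvd ha (by simp) (by simp) le_rfl hmn

end PadicInt

open PadicInt

theorem isCompatible_iff_pow_dvd {p : ℕ} [Fact p.Prime] {f : ℤ_[p] → ℤ_[p]} :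
    IsCompatible f ↔ ∀ x y (n : ℕ), (p : ℤ_[p]) ^ n ∣ x - y → (p : ℤ_[p]) ^ n ∣ f x - f y := by
  refine ⟨fun hf x y n hxy => ?_, fun hf x y => ?_⟩
  · rw [pow_dvd_iff_norm_le] at hxy ⊢
    exact (hf x y).trans hxy
  · obtain rfl | hxy := eq_or_ne x y
    · simp
    have hnorm := norm_eq_zpow_neg_valuation (sub_ne_zero.2 hxy)
    rw [hnorm, ← pow_dvd_iff_norm_le]
    exact hf x y _ ((pow_dvd_iff_norm_le _ _).2 hnorm.le)

theorem stmt16 {p : ℕ} [Fact p.Prime] (u v : ℤ_[p] → ℤ_[p])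
    (hu : IsCompatible u) (hv : IsCompatible v)
    (hu1 : ∀ z : ℤ_[p], (p : ℤ_[p]) ∣ (u z - 1)) :
    ∃ f : ℤ_[p] → ℤ_[p],
      (∀ (z : ℤ_[p]) (n : ℕ), (p : ℤ_[p]) ^ n ∣ f z - (u z) ^ (PadicInt.appr (v z) n)) ∧
      IsCompatible f := by
  choose f hf using fun z => exists_pow_dvd_sub_pow_appr (hu1 z) (v z)
  refine ⟨f, hf, isCompatible_iff_pow_dvd.2 fun x y n hxy => ?_⟩
  have happr : (p : ℤ_[p]) ^ n ∣ u x ^ (v x).appr n - u y ^ (v y).appr n :=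
    pow_appr_sub_pow_appr_dvd (hu1 y) (isCompatible_iff_pow_dvd.1 hu x y n hxy)
      (isCompatible_iff_pow_dvd.1 hv x y n hxy) le_rfl le_rfl
  convert ((hf x n).sub (hf y n)).add happr using 1
  ring
end

section
/- Let p be a prime and g : ℤ_p → ℤ_p a 1-Lipschitz (compatible) function. Then the function f(x) = 1 + x + p^2 · g(x) is transitive modulo p^k for every k ≥ 1, i.e., it induces a single-cycle permutation on ℤ/p^k ℤ for all k. -/
/-!
Write `Δ x = f x - x`. Since `Δ x - Δ y ∈ p² (x - y) ℤ_[p]` (and the same holds for every iterate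
of `f`), the displacement of `F = f^[p ^ k]` is constant modulo `p ^ (k + 2)` along any orbit that
stays in `x + p ^ k ℤ_[p]`. Induction on `k` then gives `f^[p ^ k] x ≡ x + p ^ k (mod p ^ (k + 1))`.
Consequently `f^[p ^ k]` is the identity modulo `p ^ k`, and its iterates run through all lifts
modulo `p ^ (k + 1)` of a class modulo `p ^ k`, so the orbit of `0` meets every class modulo
`p ^ k`.
-/

section Displacement

variable {R : Type*} [CommRing R]

def HasContractingDisplacement (π : R) (f : R → R) : Prop :=
  ∀ n x y, π ^ n ∣ x - y → π ^ (n + 2) ∣ (f x - x) - (f y - y)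

variable {π : R} {f : R → R}

theorem hasContractingDisplacement_add_add_sq_mul (c : R) {g : R → R}
    (hg : ∀ n x y, π ^ n ∣ x - y → π ^ n ∣ g x - g y) :
    HasContractingDisplacement π (fun x => c + x + π ^ 2 * g x) := by
  intro n x y h
  have hsub : (c + x + π ^ 2 * g x - x) - (c + y + π ^ 2 * g y - y) = π ^ 2 * (g x - g y) := by
    ring
  rw [hsub, pow_add, mul_comm]
  exact mul_dvd_mul_left _ (hg n x y h)

namespace HasContractingDisplacement

theorem pow_dvd_sub (hf : HasContractingDisplacement π f) {n : ℕ} {x y : R}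
    (h : π ^ n ∣ x - y) : π ^ n ∣ f x - f y := by
  have hΔ := (pow_dvd_pow π (n.le_add_right 2)).trans (hf n x y h)
  convert dvd_add h hΔ using 1
  ring

theorem iterate (hf : HasContractingDisplacement π f) (m : ℕ) :
    HasContractingDisplacement π f^[m] := by
  intro n x y h
  induction m with
  | zero => simp
  | succ m ih =>
    have hm : π ^ n ∣ f^[m] x - f^[m] y := by
      convert dvd_add h ((pow_dvd_pow π (n.le_add_right 2)).trans ih) using 1
      ring
    rw [Function.iterate_succ_apply', Function.iterate_succ_apply']
    convert dvd_add (hf n _ _ hm) ih using 1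
    ring

/-- The orbit of `x` stays in `x + π ^ k R`, where the displacement is constant modulo
`π ^ (k + 2)`. -/
theorem pow_dvd_iterate_sub_sub_mul (hf : HasContractingDisplacement π f) {k : ℕ} {x : R}
    (hx : π ^ k ∣ f x - x) (j : ℕ) :
    π ^ (k + 2) ∣ f^[j] x - x - j * (f x - x) := by
  induction j with
  | zero => simp
  | succ j ih =>
    have hj : π ^ k ∣ f^[j] x - x := by
      convert dvd_add ((pow_dvd_pow π (k.le_add_right 2)).trans ih) (hx.mul_left j) using 1
      ring
    rw [Function.iterate_succ_apply']
    convert dvd_add (hf k _ _ hj) ih using 1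
    push_cast
    ring

variable {p : ℕ}

theorem pow_dvd_iterate_pow_sub_sub (hf : HasContractingDisplacement (p : R) f)
    (h1 : ∀ x, (p : R) ∣ f x - x - 1) (k : ℕ) (x : R) :
    (p : R) ^ (k + 1) ∣ f^[p ^ k] x - x - p ^ k := by
  induction k with
  | zero => simpa using h1 x
  | succ k ih =>
    have hx : (p : R) ^ k ∣ f^[p ^ k] x - x :=
      dvd_sub_self_right.mp ((pow_dvd_pow _ k.le_succ).trans ih)
    have hp := (hf.iterate (p ^ k)).pow_dvd_iterate_sub_sub_mul hx p
    have hpih := mul_dvd_mul_left (p : R) ih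
    rw [← pow_succ'] at hpih
    rw [pow_succ p k, Function.iterate_mul]
    convert dvd_add hp hpih using 1
    ring

theorem pow_dvd_iterate_pow_sub (hf : HasContractingDisplacement (p : R) f)
    (h1 : ∀ x, (p : R) ∣ f x - x - 1) (k : ℕ) (x : R) :
    (p : R) ^ k ∣ f^[p ^ k] x - x :=
  dvd_sub_self_right.mp ((pow_dvd_pow _ k.le_succ).trans (hf.pow_dvd_iterate_pow_sub_sub h1 k x))

theorem pow_dvd_iterate_pow_mul_sub_sub (hf : HasContractingDisplacement (p : R) f)
    (h1 : ∀ x, (p : R) ∣ f x - x - 1) (k j : ℕ) (x : R) :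
    (p : R) ^ (k + 1) ∣ f^[p ^ k * j] x - x - j * p ^ k := by
  have hj := (hf.iterate (p ^ k)).pow_dvd_iterate_sub_sub_mul (hf.pow_dvd_iterate_pow_sub h1 k x) j
  have htrans := (hf.pow_dvd_iterate_pow_sub_sub h1 k x).mul_left (j : R)
  rw [Function.iterate_mul]
  convert dvd_add ((pow_dvd_pow _ (k + 1).le_succ).trans hj) htrans using 1
  ring

theorem exists_pow_dvd_iterate_sub (hf : HasContractingDisplacement (p : R) f)
    (h1 : ∀ x, (p : R) ∣ f x - x - 1) (hR : ∀ w : R, ∃ j : ℕ, (p : R) ∣ w + j)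
    (x₀ : R) (k : ℕ) (z : R) : ∃ m, (p : R) ^ k ∣ f^[m] x₀ - z := by
  induction k generalizing z with
  | zero => exact ⟨0, by simp⟩
  | succ k ih =>
    obtain ⟨m, w, hw⟩ := ih z
    obtain ⟨j, hj⟩ := hR w
    refine ⟨p ^ k * j + m, ?_⟩
    have hstep := hf.pow_dvd_iterate_pow_mul_sub_sub h1 k j (f^[m] x₀)
    have hwj := mul_dvd_mul_left ((p : R) ^ k) hj
    rw [← pow_succ] at hwj
    rw [Function.iterate_add_apply]
    convert dvd_add hstep hwj using 1
    linear_combination hw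

end HasContractingDisplacement

end Displacement

theorem Function.exists_iterate_eq_of_isPeriodicPt {α : Type*} {G : α → α} {n : ℕ} (hn : 0 < n)
    (hper : ∀ a, Function.IsPeriodicPt G n a) {x₀ : α} (hx₀ : ∀ b, ∃ m, G^[m] x₀ = b)
    (a b : α) : ∃ m, G^[m] a = b := by
  obtain ⟨s, rfl⟩ := hx₀ a
  obtain ⟨t, rfl⟩ := hx₀ b
  refine ⟨t + (n - 1) * s, ?_⟩
  have hns : t + (n - 1) * s + s = t + n * s := by
    obtain ⟨n, rfl⟩ := Nat.exists_eq_add_of_lt hn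
    simp only [zero_add, Nat.add_sub_cancel]
    ring
  rw [← Function.iterate_add_apply, hns, Function.iterate_add_apply, ((hper x₀).mul_const s).eq]

namespace PadicInt

variable {p : ℕ} [Fact p.Prime]

theorem toZModPow_eq_iff_pow_dvd_sub (k : ℕ) (x y : ℤ_[p]) :
    toZModPow k x = toZModPow k y ↔ (p : ℤ_[p]) ^ k ∣ x - y := by
  rw [← sub_eq_zero, ← map_sub, ← RingHom.mem_ker, ker_toZModPow, Ideal.mem_span_singleton]

theorem exists_natCast_dvd_add (w : ℤ_[p]) : ∃ j : ℕ, (p : ℤ_[p]) ∣ w + j := by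
  obtain ⟨j, -, hj⟩ := exists_mem_range (-w)
  rw [maximalIdeal_eq_span_p, Ideal.mem_span_singleton] at hj
  exact ⟨j, by convert dvd_neg.mpr hj using 1; ring⟩

theorem transitiveMod_of_isPeriodicPt {f : ℤ_[p] → ℤ_[p]} {k : ℕ}
    (hf : ∀ x y, (p : ℤ_[p]) ^ k ∣ x - y → (p : ℤ_[p]) ^ k ∣ f x - f y)
    (hper : ∀ x, (p : ℤ_[p]) ^ k ∣ f^[p ^ k] x - x)
    (horbit : ∀ z, ∃ m, (p : ℤ_[p]) ^ k ∣ f^[m] 0 - z) :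
    TransitiveMod f k := by
  have hsurj := ZMod.ringHom_surjective (toZModPow (p := p) k)
  set G := fun a => toZModPow k (f (Function.surjInv hsurj a))
  have hsemi : Function.Semiconj (toZModPow k) f G := fun x => by
    rw [toZModPow_eq_iff_pow_dvd_sub]
    apply hf
    rw [← toZModPow_eq_iff_pow_dvd_sub, Function.surjInv_eq hsurj]
  refine ⟨G, fun x => (hsemi x).symm, ?_⟩
  refine Function.exists_iterate_eq_of_isPeriodicPt (pow_pos (Fact.out : p.Prime).pos k)
    (x₀ := toZModPow k 0) (fun a => ?_) (fun b => ?_)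
  · obtain ⟨x, rfl⟩ := hsurj a
    rw [Function.IsPeriodicPt, Function.IsFixedPt, ← (hsemi.iterate_right _) x,
      toZModPow_eq_iff_pow_dvd_sub]
    exact hper x
  · obtain ⟨z, rfl⟩ := hsurj b
    obtain ⟨m, hm⟩ := horbit z
    exact ⟨m, by rw [← (hsemi.iterate_right m) 0, toZModPow_eq_iff_pow_dvd_sub]; exact hm⟩

end PadicInt

theorem IsCompatible.pow_dvd_sub {p : ℕ} [Fact p.Prime] {g : ℤ_[p] → ℤ_[p]} (hg : IsCompatible g)
    {n : ℕ} {x y : ℤ_[p]} (h : (p : ℤ_[p]) ^ n ∣ x - y) : (p : ℤ_[p]) ^ n ∣ g x - g y := by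
  rw [← Ideal.mem_span_singleton, ← PadicInt.norm_le_pow_iff_mem_span_pow] at h ⊢
  exact (hg x y).trans h

theorem stmt17 {p : ℕ} [Fact p.Prime] (g : ℤ_[p] → ℤ_[p]) (hg : IsCompatible g) :
    ∀ k : ℕ, 1 ≤ k → TransitiveMod (fun x => 1 + x + (p : ℤ_[p]) ^ 2 * g x) k := by
  intro k _
  set f := fun x => 1 + x + (p : ℤ_[p]) ^ 2 * g x
  have hf : HasContractingDisplacement (p : ℤ_[p]) f :=
    hasContractingDisplacement_add_add_sq_mul 1 fun _ _ _ => hg.pow_dvd_sub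
  have h1 : ∀ x, (p : ℤ_[p]) ∣ f x - x - 1 := fun x =>
    ⟨p * g x, by simp only [f]; ring⟩
  exact PadicInt.transitiveMod_of_isPeriodicPt (fun _ _ => hf.pow_dvd_sub)
    (hf.pow_dvd_iterate_pow_sub h1 k)
    (hf.exists_pow_dvd_iterate_sub h1 PadicInt.exists_natCast_dvd_add 0 k)
end
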